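/- arXiv:2410.15535 — 11 statements merged into one kernel-verified Lean document; each statement's English description precedes it below -/
import Mathlib

section
/- Let 0 ≤ R₀ < R₁ and let F : ℂ → ℂ be holomorphic on the annulus A(R₀,R₁) = {z ∈ ℂ : R₀ < |z| < R₁} with F(z) ≠ 0 for every z ∈ A(R₀,R₁). Then there exists a function G : ℂ → ℂ holomorphic on A(R₀,R₁) such that either F(z) = G(z)² for all z ∈ A(R₀,R₁), or F(z) = z·G(z)² for all z ∈ A(R₀,R₁). -/
open Complex Set Filter Topology Function

/-!
Pull `F` back along `exp` to the strip `exp ⁻¹' A`, which is convex and hence simply connected,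
so `F ∘ exp = exp ∘ L` for a holomorphic `L`. Since `F ∘ exp` is `2πi`-periodic, the continuous
function `L (w + 2πi) - L w` takes values in `2πiℤ`, so it is a constant `2πin`. Then
`L w - n w` is `2πi`-periodic and descends along `exp` to a holomorphic `h` on `A` with
`F z = exp (h z) * z ^ n`, and `G z = z ^ k * exp (h z / 2)` works for `n = 2k` or `n = 2k + 1`.
-/

theorem ContinuousAt.differentiableAt_of_exp_comp {f g : ℂ → ℂ} {a : ℂ}
    (hf : ContinuousAt f a) (hg : DifferentiableAt ℂ g a) (hfg : exp ∘ f =ᶠ[𝓝 a] g) :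
    DifferentiableAt ℂ f a := by
  have hexp := (hasDerivAt_exp (f a)).hasFDerivAt
  refine (hexp.of_comp_of_leftInverse hf hg.hasFDerivAt hfg
    (f'symm := ContinuousLinearMap.smulRight (1 : ℂ →L[ℂ] ℂ) (exp (f a))⁻¹)
    fun x => ?_).differentiableAt
  simp [exp_ne_zero]

theorem DifferentiableOn.exists_differentiableOn_eqOn_exp_comp {S : Set ℂ} {g : ℂ → ℂ}
    (hSc : Convex ℝ S) (hSo : IsOpen S) (hg : DifferentiableOn ℂ g S) (hg0 : ∀ z ∈ S, g z ≠ 0) :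
    ∃ f : ℂ → ℂ, DifferentiableOn ℂ f S ∧ EqOn (Complex.exp ∘ f) g S := by
  rcases S.eq_empty_or_nonempty with rfl | hne
  · exact ⟨0, differentiableOn_empty, eqOn_empty _ _⟩
  have : ContractibleSpace S := hSc.contractibleSpace hne
  obtain ⟨f, hfc, hfg⟩ := exists_continuousOn_eqOn_exp_comp
    (SimplyConnectedSpace.ofContractible S) hSo hg.continuousOn (fun ⟨z, hz, h0⟩ => hg0 z hz h0)
  refine ⟨f, fun z hz => (ContinuousAt.differentiableAt_of_exp_comp (hfc.continuousAt
    (hSo.mem_nhds hz)) (hg.differentiableAt (hSo.mem_nhds hz)) ?_).differentiableWithinAt, hfg⟩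
  exact eventually_of_mem (hSo.mem_nhds hz) hfg

theorem IsPreconnected.exists_int_eqOn_add_of_exp_eq {S : Set ℂ} (hS : IsPreconnected S)
    {f g : ℂ → ℂ} (hf : ContinuousOn f S) (hg : ContinuousOn g S)
    (hfg : ∀ w ∈ S, exp (f w) = exp (g w)) :
    ∃ n : ℤ, ∀ w ∈ S, f w = g w + n * (2 * Real.pi * I) := by
  rcases S.eq_empty_or_nonempty with rfl | ⟨w₀, hw₀⟩
  · exact ⟨0, fun _ => False.elim⟩
  have hmaps : MapsTo (f - g) S (AddSubgroup.zmultiples (2 * Real.pi * I)) := fun w hw => by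
    obtain ⟨n, hn⟩ := exp_eq_exp_iff_exists_int.mp (hfg w hw)
    exact ⟨n, by simp [hn]⟩
  obtain ⟨n, hn⟩ := hmaps hw₀
  refine ⟨n, fun w hw => ?_⟩
  have := hS.constant_of_mapsTo
    (isDiscrete_iff_discreteTopology.mpr (NormedSpace.discreteTopology_zmultiples _))
    (hf.sub hg) hmaps hw hw₀
  simp only [Pi.sub_apply, ← hn, zsmul_eq_mul] at this
  linear_combination this

theorem Function.Periodic.differentiableAt_comp_log {E : Type*} [NormedAddCommGroup E]
    [NormedSpace ℂ E] {Q : ℂ → E} (hQ : Periodic Q (2 * Real.pi * I)) {z : ℂ} (hz : z ≠ 0)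
    (hd : DifferentiableAt ℂ Q (log z)) : DifferentiableAt ℂ (Q ∘ log) z := by
  have hexp := hasStrictDerivAt_exp (log z)
  set ψ := hexp.localInverse exp _ _ (exp_ne_zero _)
  have hψ : DifferentiableAt ℂ ψ (exp (log z)) :=
    (hexp.to_localInverse (exp_ne_zero _)).hasStrictFDerivAt.differentiableAt
  have hψz : ψ (exp (log z)) = log z :=
    (hexp.eventually_left_inverse (exp_ne_zero _)).self_of_nhds
  have hright : ∀ᶠ u in 𝓝 (exp (log z)), exp (ψ u) = u :=
    hexp.eventually_right_inverse (exp_ne_zero _)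
  rw [exp_log hz] at hψ hψz hright
  rw [← hψz] at hd
  refine (hd.comp z hψ).congr_of_eventuallyEq ?_
  filter_upwards [isOpen_ne.mem_nhds hz, hright] with u hu hexpψ
  obtain ⟨m, hm⟩ := exp_eq_exp_iff_exists_int.mp (hexpψ.trans (exp_log hu).symm)
  simp [hm, (hQ.int_mul m) (log u)]

theorem convex_exp_preimage_norm_preimage {s : Set ℝ} (hs : s.OrdConnected) :
    Convex ℝ (exp ⁻¹' (norm ⁻¹' s)) := by
  have : exp ⁻¹' (norm ⁻¹' s) = reLm ⁻¹' (Real.exp ⁻¹' s) := by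
    ext w; simp [norm_exp]
  rw [this]
  exact (hs.preimage_mono Real.exp_monotone).convex.linear_preimage reLm

theorem exists_differentiableOn_eq_exp_mul_zpow {s : Set ℝ} (hso : IsOpen s)
    (hs : s.OrdConnected) (hs0 : 0 ∉ s) {F : ℂ → ℂ} (hF : DifferentiableOn ℂ F (norm ⁻¹' s))
    (hF0 : ∀ z ∈ norm ⁻¹' s, F z ≠ 0) :
    ∃ h : ℂ → ℂ, ∃ n : ℤ, DifferentiableOn ℂ h (norm ⁻¹' s) ∧
      ∀ z ∈ norm ⁻¹' s, F z = exp (h z) * z ^ n := by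
  set S := exp ⁻¹' (norm ⁻¹' s)
  have hSo : IsOpen S := (hso.preimage continuous_norm).preimage continuous_exp
  have hSc : Convex ℝ S := convex_exp_preimage_norm_preimage hs
  have hS_add : ∀ w, w + 2 * Real.pi * I ∈ S ↔ w ∈ S := fun w => by
    simp only [S, mem_preimage, exp_periodic w]
  obtain ⟨L, hL, hLF⟩ := (hF.comp differentiable_exp.differentiableOn (mapsTo_preimage _ _))
    |>.exists_differentiableOn_eqOn_exp_comp hSc hSo
      fun w hw => hF0 _ hw
  have hexpL : ∀ w ∈ S, exp (L w) = F (exp w) := fun w hw => hLF hw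
  obtain ⟨n, hn⟩ := hSc.isPreconnected.exists_int_eqOn_add_of_exp_eq
      (f := fun w => L (w + 2 * Real.pi * I)) (g := L)
      (hL.continuousOn.comp (by fun_prop) fun w hw => (hS_add w).2 hw) hL.continuousOn
      fun w hw => by
        rw [hexpL _ ((hS_add w).2 hw), hexpL w hw, exp_periodic]
  -- extended by `0` off the strip `S`, so that it is `2πi`-periodic on all of `ℂ`
  set P := S.indicator fun w => L w - n * w
  have hP : Periodic P (2 * Real.pi * I) := fun w => by
    by_cases hw : w ∈ S
    · simp only [P, indicator_of_mem hw, indicator_of_mem ((hS_add w).2 hw), hn w hw]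
      ring
    · simp only [P, indicator_of_notMem hw, indicator_of_notMem (mt (hS_add w).1 hw)]
  have hlog : ∀ z ∈ norm ⁻¹' s, log z ∈ S ∧ z ≠ 0 := fun z hz => by
    have hz0 : z ≠ 0 := by
      rintro rfl
      exact hs0 (by simpa using hz)
    exact ⟨by simpa [S, exp_log hz0] using hz, hz0⟩
  refine ⟨P ∘ log, n, fun z hz => ?_, fun z hz => ?_⟩
  · obtain ⟨hzS, hz0⟩ := hlog z hz
    refine (hP.differentiableAt_comp_log hz0 ?_).differentiableWithinAt
    have hLn : DifferentiableAt ℂ (fun w => L w - n * w) (log z) :=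
      (hL.differentiableAt (hSo.mem_nhds hzS)).sub (differentiableAt_id.const_mul _)
    refine hLn.congr_of_eventuallyEq ?_
    filter_upwards [hSo.mem_nhds hzS] with w hw using indicator_of_mem hw _
  · obtain ⟨hzS, hz0⟩ := hlog z hz
    have := hexpL _ hzS
    rw [exp_log hz0] at this
    rw [comp_apply, show P (log z) = _ from indicator_of_mem hzS _, exp_sub, exp_int_mul,
      exp_log hz0, this, div_mul_cancel₀ _ (zpow_ne_zero n hz0)]

theorem stmt_0_general (R₀ R₁ : ℝ) (hR₀ : 0 ≤ R₀) (F : ℂ → ℂ)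
    (A : Set ℂ) (hA : A = {z : ℂ | R₀ < ‖z‖ ∧ ‖z‖ < R₁})
    (hF : DifferentiableOn ℂ F A) (hF0 : ∀ z ∈ A, F z ≠ 0) :
    ∃ G : ℂ → ℂ, DifferentiableOn ℂ G A ∧
      ((∀ z ∈ A, F z = (G z) ^ 2) ∨ (∀ z ∈ A, F z = z * (G z) ^ 2)) := by
  have hA0 : 0 ∉ Ioo R₀ R₁ := fun h => h.1.not_ge hR₀
  change A = norm ⁻¹' Ioo R₀ R₁ at hA
  subst hA
  obtain ⟨h, n, hh, hFh⟩ :=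
    exists_differentiableOn_eq_exp_mul_zpow isOpen_Ioo ordConnected_Ioo hA0 hF hF0
  have hz0 : ∀ z : ℂ, z ∈ norm ⁻¹' Ioo R₀ R₁ → z ≠ 0 := by
    rintro z hz rfl
    exact hA0 (by simpa using hz)
  obtain ⟨k, hk⟩ := Int.even_or_odd' n
  refine ⟨fun z => z ^ k * exp (h z / 2), fun z hz => ?_, ?_⟩
  · exact ((differentiableAt_zpow.mpr (.inl (hz0 z hz))).differentiableWithinAt).mul
      ((hh z hz).div_const 2).cexp
  have hsq : ∀ z : ℂ, (z ^ k * exp (h z / 2)) ^ 2 = exp (h z) * z ^ (2 * k) := fun z => by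
    rw [mul_pow, ← exp_nat_mul, ← zpow_natCast, ← zpow_mul]
    push_cast
    ring_nf
  rcases hk with rfl | rfl
  · exact .inl fun z hz => by rw [hFh z hz, hsq z]
  · refine .inr fun z hz => ?_
    rw [hFh z hz, zpow_add_one₀ (hz0 z hz), hsq z]
    ring

/-- On an annulus, a nonvanishing holomorphic function is either a square or
`z` times a square of a holomorphic function. -/
theorem stmt_0 (R₀ R₁ : ℝ) (hR₀ : 0 ≤ R₀) (hR : R₀ < R₁) (F : ℂ → ℂ)
    (A : Set ℂ) (hA : A = {z : ℂ | R₀ < ‖z‖ ∧ ‖z‖ < R₁})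
    (hF : DifferentiableOn ℂ F A) (hF0 : ∀ z ∈ A, F z ≠ 0) :
    ∃ G : ℂ → ℂ, DifferentiableOn ℂ G A ∧
      ((∀ z ∈ A, F z = (G z) ^ 2) ∨ (∀ z ∈ A, F z = z * (G z) ^ 2)) :=
  stmt_0_general R₀ R₁ hR₀ F A hA hF hF0
end

section
/- Let 0 ≤ R₀ < R₁ and let F : ℂ → ℂ be holomorphic and nonvanishing on the annulus A(R₀,R₁) = {z ∈ ℂ : R₀ < |z| < R₁}. Then there exist an integer m ∈ ℤ and a function H : ℂ → ℂ holomorphic on A(R₀,R₁) such that F(z) = zᵐ · exp(H(z)) for all z ∈ A(R₀,R₁). -/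
open Complex

/-!
Pull `F` back along `exp` to the strip `S = exp ⁻¹' A`. The strip is convex, hence simply
connected, so `F ∘ exp` has a continuous logarithm `G` there, which is holomorphic because `exp`
is a local biholomorphism. As `F ∘ exp` is `2πi`-periodic, `G (w + 2πi) - G w` is a continuous
function with values in `2πiℤ`, hence a constant `2πi m` on the connected strip. Then
`G w - m w` is `2πi`-periodic, so it descends through `exp` to a holomorphic `H` on `A`, and
`F (exp w) = exp (m w) * exp (G w - m w)` becomes `F z = z ^ m * exp (H z)`.
-/

open Set Topology Function
open scoped Real

theorem ContinuousOn.differentiableOn_of_exp_comp {E : Type*} [NormedAddCommGroup E]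
    [NormedSpace ℂ E] {f g : E → ℂ} {s : Set E} (hs : IsOpen s) (hf : ContinuousOn f s)
    (hg : DifferentiableOn ℂ g s) (hfg : EqOn (exp ∘ f) g s) : DifferentiableOn ℂ f s := by
  intro x hx
  have hx' := hs.mem_nhds hx
  set e := ContinuousLinearEquiv.unitsEquivAut ℂ (Units.mk0 _ (exp_ne_zero (f x)))
  have hexp : HasFDerivAt exp (e : ℂ →L[ℂ] ℂ) (f x) :=
    ((hasStrictDerivAt_exp (f x)).hasStrictFDerivAt_equiv (exp_ne_zero _)).hasFDerivAt
  exact (hexp.of_comp_of_leftInverse (f'symm := (e.symm : ℂ →L[ℂ] ℂ)) (hf.continuousAt hx')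
    (hg.differentiableAt hx').hasFDerivAt (hfg.eventuallyEq_of_mem hx')
    e.symm_apply_apply).differentiableAt.differentiableWithinAt

theorem Function.Periodic.differentiableAt_comp_log_s1 {E : Type*} [NormedAddCommGroup E]
    [NormedSpace ℂ E] {Φ : ℂ → E} (hΦ : Periodic Φ (2 * π * I)) {w : ℂ}
    (hw : DifferentiableAt ℂ Φ w) : DifferentiableAt ℂ (Φ ∘ log) (exp w) := by
  have hexp := (hasStrictDerivAt_exp w).hasStrictFDerivAt_equiv (exp_ne_zero w)
  -- `log` jumps by `2πi` across the negative axis, which `Φ` does not see: near `exp w`,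
  -- `Φ ∘ log` agrees with `Φ` composed with a holomorphic local inverse of `exp`.
  have hΦL : Φ ∘ hexp.localInverse =ᶠ[𝓝 (exp w)] Φ ∘ log := by
    filter_upwards [hexp.eventually_right_inverse] with z hz
    obtain ⟨n, hn⟩ :=
      exp_eq_exp_iff_exists_int.mp (hz.trans (exp_log (hz ▸ exp_ne_zero _)).symm)
    simp only [comp_apply, hn, (hΦ.int_mul n) (log z)]
  rw [← hexp.localInverse_apply_image] at hw
  exact (hw.comp _ hexp.to_localInverse.differentiableAt).congr_of_eventuallyEq hΦL.symm

theorem IsPreconnected.exists_intCast_mul_two_pi_I_of_exp_eq_one {X : Type*}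
    [TopologicalSpace X] {s : Set X} (hs : IsPreconnected s) {f : X → ℂ}
    (hf : ContinuousOn f s) (h1 : ∀ x ∈ s, exp (f x) = 1) :
    ∃ n : ℤ, ∀ x ∈ s, f x = n * (2 * π * I) := by
  have hmaps : MapsTo f s (AddSubgroup.zmultiples (2 * π * I)) := fun x hx ↦ by
    obtain ⟨n, hn⟩ := exp_eq_one_iff.mp (h1 x hx)
    exact ⟨n, by simp [hn]⟩
  have hdiscrete : IsDiscrete (AddSubgroup.zmultiples (2 * π * I) : Set ℂ) :=
    isDiscrete_iff_discreteTopology.mpr (NormedSpace.discreteTopology_zmultiples _)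
  obtain ⟨c, ⟨n, rfl⟩, hfc⟩ :=
    hs.eqOn_const_of_mapsTo hdiscrete hf hmaps ⟨0, zero_mem _⟩
  exact ⟨n, fun x hx ↦ by simp [hfc hx]⟩

theorem Complex.exists_differentiableOn_eqOn_exp_comp {E : Type*} [NormedAddCommGroup E]
    [NormedSpace ℂ E] {U : Set E} (hUc : IsSimplyConnected U) (hUo : IsOpen U) {g : E → ℂ}
    (hg : DifferentiableOn ℂ g U) (hg0 : ∀ x ∈ U, g x ≠ 0) :
    ∃ f : E → ℂ, DifferentiableOn ℂ f U ∧ EqOn (exp ∘ f) g U := by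
  obtain ⟨f, hfc, hf⟩ :=
    exists_continuousOn_eqOn_exp_comp hUc hUo hg.continuousOn fun ⟨x, hx, h0⟩ ↦ hg0 x hx h0
  exact ⟨f, hfc.differentiableOn_of_exp_comp hUo hg hf, hf⟩

theorem Set.periodic_indicator {α β : Type*} [Add α] [Zero β] {s : Set α} {f : α → β}
    {c : α} (hs : ∀ x, x + c ∈ s ↔ x ∈ s) (hf : ∀ x ∈ s, f (x + c) = f x) :
    Periodic (s.indicator f) c := fun x ↦ by
  by_cases hx : x ∈ s
  · rw [indicator_of_mem hx, indicator_of_mem ((hs x).2 hx), hf x hx]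
  · rw [indicator_of_notMem hx, indicator_of_notMem (mt (hs x).1 hx)]

theorem Complex.exists_zpow_mul_exp_of_differentiableOn {U : Set ℂ} (hUo : IsOpen U)
    (hU0 : 0 ∉ U) (hUc : IsSimplyConnected (exp ⁻¹' U)) {F : ℂ → ℂ}
    (hF : DifferentiableOn ℂ F U) (hF0 : ∀ z ∈ U, F z ≠ 0) :
    ∃ (m : ℤ) (H : ℂ → ℂ), DifferentiableOn ℂ H U ∧
      ∀ z ∈ U, F z = z ^ m * exp (H z) := by
  set S := exp ⁻¹' U
  have hSo : IsOpen S := hUo.preimage continuous_exp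
  have hS_periodic (w : ℂ) : w + 2 * π * I ∈ S ↔ w ∈ S := by
    rw [mem_preimage, mem_preimage, exp_periodic w]
  obtain ⟨G, hGd, hG⟩ := exists_differentiableOn_eqOn_exp_comp hUc hSo
    (hF.comp differentiable_exp.differentiableOn (mapsTo_preimage _ _)) fun w hw ↦ hF0 _ hw
  have hG' : ∀ w ∈ S, exp (G w) = F (exp w) := hG
  obtain ⟨m, hm⟩ : ∃ m : ℤ, ∀ w ∈ S, G (w + 2 * π * I) - G w = m * (2 * π * I) := by
    have hshift : ContinuousOn (fun w ↦ G (w + 2 * π * I) - G w) S :=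
      (hGd.continuousOn.comp (continuousOn_id.add continuousOn_const)
        fun w hw ↦ (hS_periodic w).2 hw).sub hGd.continuousOn
    refine hUc.isPathConnected.isConnected.isPreconnected
      |>.exists_intCast_mul_two_pi_I_of_exp_eq_one hshift fun w hw ↦ ?_
    rw [exp_sub, hG' _ ((hS_periodic w).2 hw), hG' w hw, exp_periodic w]
    exact div_self (hF0 _ hw)
  -- Extended by zero off `S`, so that it is `2πi`-periodic on all of `ℂ`.
  set Φ := S.indicator fun w ↦ G w - m * w
  have hΦ : Periodic Φ (2 * π * I) :=
    Set.periodic_indicator hS_periodic fun w hw ↦ by linear_combination hm w hw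
  have hΦS : EqOn Φ (fun w ↦ G w - m * w) S := fun w hw ↦ indicator_of_mem hw _
  have hΦd : DifferentiableOn ℂ Φ S :=
    (hGd.sub ((differentiableOn_const _).mul differentiableOn_id)).congr hΦS
  have hU0' : ∀ z ∈ U, z ≠ 0 := fun z hz h0 ↦ hU0 (h0 ▸ hz)
  have hlog : ∀ z ∈ U, log z ∈ S := fun z hz ↦ by rwa [mem_preimage, exp_log (hU0' z hz)]
  refine ⟨m, Φ ∘ log, fun z hz ↦ ?_, fun z hz ↦ ?_⟩
  · have := hΦ.differentiableAt_comp_log_s1 (hΦd.differentiableAt (hSo.mem_nhds (hlog z hz)))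
    rw [exp_log (hU0' z hz)] at this
    exact this.differentiableWithinAt
  · calc F z = exp (G (log z)) := by rw [hG' _ (hlog z hz), exp_log (hU0' z hz)]
      _ = exp (m * log z) * exp (G (log z) - m * log z) := by rw [← exp_add]; ring_nf
      _ = z ^ m * exp ((Φ ∘ log) z) := by
        rw [exp_int_mul, exp_log (hU0' z hz), comp_apply, hΦS (hlog z hz)]

theorem convex_exp_preimage_annulus (R₀ R₁ : ℝ) :
    Convex ℝ (exp ⁻¹' {z : ℂ | R₀ < ‖z‖ ∧ ‖z‖ < R₁}) := by
  have : exp ⁻¹' {z : ℂ | R₀ < ‖z‖ ∧ ‖z‖ < R₁} =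
      reLm ⁻¹' (Real.exp ⁻¹' Ioo R₀ R₁) := by
    ext w; simp [norm_exp]
  rw [this]
  exact (ordConnected_Ioo.preimage_mono Real.exp_monotone).convex.linear_preimage _

/-- On an annulus, a nonvanishing holomorphic function can be written as
`z ^ m * exp (H z)` for some integer `m` and holomorphic `H`. -/
theorem stmt_1 (R₀ R₁ : ℝ) (hR₀ : 0 ≤ R₀) (hR : R₀ < R₁) (F : ℂ → ℂ)
    (A : Set ℂ) (hA : A = {z : ℂ | R₀ < ‖z‖ ∧ ‖z‖ < R₁})
    (hF : DifferentiableOn ℂ F A) (hF0 : ∀ z ∈ A, F z ≠ 0) :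
    ∃ (m : ℤ) (H : ℂ → ℂ), DifferentiableOn ℂ H A ∧
      ∀ z ∈ A, F z = z ^ m * Complex.exp (H z) := by
  have hAo : IsOpen A := hA ▸
    (isOpen_lt continuous_const continuous_norm).inter (isOpen_lt continuous_norm continuous_const)
  have hA0 : (0 : ℂ) ∉ A := fun h ↦ by
    rw [hA] at h
    exact (hR₀.trans_lt h.1).ne' norm_zero
  have hmid : (((R₀ + R₁) / 2 : ℝ) : ℂ) ∈ A := by
    rw [hA, mem_ofPred_eq, norm_real, Real.norm_of_nonneg (by linarith)]
    constructor <;> linarith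
  have hSconv : Convex ℝ (exp ⁻¹' A) := hA ▸ convex_exp_preimage_annulus R₀ R₁
  have := hSconv.contractibleSpace
    ⟨log _, by rwa [mem_preimage, exp_log (ne_of_mem_of_not_mem hmid hA0)]⟩
  exact exists_zpow_mul_exp_of_differentiableOn hAo hA0 (SimplyConnectedSpace.ofContractible _)
    hF hF0
end

section
/- Let 0 ≤ R₀ < R₁, let a : ℤ → ℂ be a family of coefficients such that for every r with R₀ < r < R₁ the family (n ↦ ‖a(n)‖·rⁿ) is summable over ℤ, and let G(z) = ∑_{n∈ℤ} a(n)·zⁿ for z in the annulus A(R₀,R₁) = {z ∈ ℂ : R₀ < |z| < R₁}. Then for every r with R₀ < r < R₁, ∫₀^{2π} ‖G(r·e^{iθ})‖² dθ = 2π·∑_{n∈ℤ} ‖a(n)‖²·r^{2n}. -/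
/-! On the circle `|z| = r` the Laurent series is the absolutely convergent Fourier series
`∑ (a n rⁿ) e^{inθ}`. Its sum is a continuous function on `AddCircle (2π)` whose Fourier
coefficients are `a n rⁿ` (integrate term by term against `e^{-imθ}`), so the identity is
Parseval's theorem for the normalised Haar measure, rescaled by the length `2π` of the circle. -/

open Complex Real MeasureTheory AddCircle

section FourierSeries

variable {T : ℝ} [Fact (0 < T)] {c : ℤ → ℂ}

lemma summable_smul_fourier (hc : Summable fun n => ‖c n‖) :
    Summable fun n => c n • (fourier n : C(AddCircle T, ℂ)) :=
  .of_norm <| by simpa only [norm_smul, fourier_norm, mul_one] using hc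

lemma tsum_smul_fourier_apply (hc : Summable fun n => ‖c n‖) (x : AddCircle T) :
    (∑' n, c n • (fourier n : C(AddCircle T, ℂ))) x = ∑' n, c n * fourier n x :=
  (ContinuousMap.evalCLM ℂ x).map_tsum (summable_smul_fourier hc)

lemma fourierCoeff_tsum_smul_fourier (hc : Summable fun n => ‖c n‖) (m : ℤ) :
    fourierCoeff (⇑(∑' n, c n • (fourier n : C(AddCircle T, ℂ)))) m = c m := by
  set F : ℤ → AddCircle T → ℂ := fun n x => fourier (-m) x • (c n * fourier n x)
  have hint (n : ℤ) : Integrable (F n) haarAddCircle :=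
    (map_continuous (fourier (-m) * c n • fourier n)).integrable_of_hasCompactSupport
      (.of_compactSpace _)
  have hnorm (n : ℤ) : ∫ x, ‖F n x‖ ∂haarAddCircle = ‖c n‖ := by
    simp [F, Circle.norm_coe]
  calc fourierCoeff (⇑(∑' n, c n • (fourier n : C(AddCircle T, ℂ)))) m
      = ∫ x, ∑' n, F n x ∂haarAddCircle := by
        simp only [fourierCoeff, tsum_smul_fourier_apply hc, F, tsum_const_smul'']
    _ = ∑' n, c n * fourierCoeff (fourier n : AddCircle T → ℂ) m := by
        rw [← integral_tsum_of_summable_integral_norm hint (by simpa only [hnorm] using hc)]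
        simp [F, fourierCoeff, integral_const_mul, smul_eq_mul, mul_left_comm]
    _ = c m := by simp [fourierCoeff_fourier, Pi.single_apply]

lemma ContinuousMap.integral_norm_sq_eq_tsum_sq_fourierCoeff (f : C(AddCircle T, ℂ)) :
    ∫ x, ‖f x‖ ^ 2 ∂haarAddCircle = ∑' n, ‖fourierCoeff f n‖ ^ 2 := by
  simp only [← fourierCoeff_toLp f, tsum_sq_fourierCoeff]
  exact integral_congr_ae <|
    (ContinuousMap.coeFn_toLp (p := 2) (𝕜 := ℂ) haarAddCircle f).symm.fun_comp (‖·‖ ^ 2)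

lemma integral_norm_sq_tsum_smul_fourier (hc : Summable fun n => ‖c n‖) :
    ∫ x, ‖(∑' n, c n • (fourier n : C(AddCircle T, ℂ))) x‖ ^ 2 ∂haarAddCircle
      = ∑' n, ‖c n‖ ^ 2 := by
  simp only [ContinuousMap.integral_norm_sq_eq_tsum_sq_fourierCoeff,
    fourierCoeff_tsum_smul_fourier hc]

end FourierSeries

lemma fourier_coe_apply_two_pi (n : ℤ) (θ : ℝ) :
    fourier n (θ : AddCircle (2 * π)) = exp (θ * I) ^ n := by
  rw [fourier_coe_apply, ← exp_int_mul]
  congr 1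
  push_cast
  field_simp

lemma intervalIntegral_norm_sq_tsum_mul_exp_zpow {c : ℤ → ℂ} (hc : Summable fun n => ‖c n‖) :
    ∫ θ in (0 : ℝ)..2 * π, ‖∑' n, c n * exp (θ * I) ^ n‖ ^ 2 = 2 * π * ∑' n, ‖c n‖ ^ 2 := by
  have : Fact (0 < 2 * π) := ⟨by positivity⟩
  set F : C(AddCircle (2 * π), ℂ) := ∑' n, c n • fourier n
  calc ∫ θ in (0 : ℝ)..2 * π, ‖∑' n, c n * exp (θ * I) ^ n‖ ^ 2
      = ∫ θ in (0 : ℝ)..0 + 2 * π, ‖F θ‖ ^ 2 := by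
        simp only [F, zero_add, tsum_smul_fourier_apply hc, fourier_coe_apply_two_pi]
    _ = 2 * π * ∫ x, ‖F x‖ ^ 2 ∂haarAddCircle := by
        rw [AddCircle.intervalIntegral_preimage _ _ fun x => ‖F x‖ ^ 2, integral_haarAddCircle,
          smul_eq_mul, mul_inv_cancel_left₀ (by positivity)]
    _ = 2 * π * ∑' n, ‖c n‖ ^ 2 := by rw [integral_norm_sq_tsum_smul_fourier hc]

theorem stmt_3_general (R₀ R₁ : ℝ) (hR₀ : 0 ≤ R₀) (a : ℤ → ℂ)
    (ha : ∀ r : ℝ, R₀ < r → r < R₁ → Summable (fun n : ℤ => ‖a n‖ * r ^ n))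
    (G : ℂ → ℂ)
    (hG : ∀ z : ℂ, R₀ < ‖z‖ → ‖z‖ < R₁ →
      G z = ∑' n : ℤ, a n * z ^ n) :
    ∀ r : ℝ, R₀ < r → r < R₁ →
      ∫ θ in (0:ℝ)..(2 * π), ‖G ((r : ℂ) * Complex.exp (θ * Complex.I))‖ ^ 2
        = 2 * π * ∑' n : ℤ, ‖a n‖ ^ 2 * r ^ (2 * n) := by
  intro r hr₀ hr₁
  have hr : 0 < r := hR₀.trans_lt hr₀
  have hnorm (n : ℤ) : ‖a n * (r : ℂ) ^ n‖ = ‖a n‖ * r ^ n := by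
    simp [abs_of_pos hr]
  have hG_circle (θ : ℝ) : G (r * exp (θ * I)) = ∑' n, a n * r ^ n * exp (θ * I) ^ n := by
    have hz : ‖(r : ℂ) * exp (θ * I)‖ = r := by simp [hr.le]
    rw [hG _ (by rwa [hz]) (by rwa [hz])]
    simp only [mul_zpow, mul_assoc]
  have hc : Summable fun n => ‖a n * (r : ℂ) ^ n‖ := by simpa only [hnorm] using ha r hr₀ hr₁
  simp only [hG_circle, intervalIntegral_norm_sq_tsum_mul_exp_zpow hc, hnorm]
  congr 2 with n
  rw [mul_pow, ← zpow_natCast (r ^ n), ← zpow_mul, mul_comm n]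
  norm_cast

/-- Parseval-type identity for a Laurent series on an annulus:
`∫₀^{2π} ‖G(r e^{iθ})‖² dθ = 2π ∑_{n∈ℤ} ‖a n‖² r^{2n}`. -/
theorem stmt_3 (R₀ R₁ : ℝ) (hR₀ : 0 ≤ R₀) (hR : R₀ < R₁) (a : ℤ → ℂ)
    (ha : ∀ r : ℝ, R₀ < r → r < R₁ → Summable (fun n : ℤ => ‖a n‖ * r ^ n))
    (G : ℂ → ℂ)
    (hG : ∀ z : ℂ, R₀ < ‖z‖ → ‖z‖ < R₁ →
      G z = ∑' n : ℤ, a n * z ^ n) :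
    ∀ r : ℝ, R₀ < r → r < R₁ →
      ∫ θ in (0:ℝ)..(2 * π), ‖G ((r : ℂ) * Complex.exp (θ * Complex.I))‖ ^ 2
        = 2 * π * ∑' n : ℤ, ‖a n‖ ^ 2 * r ^ (2 * n) :=
  stmt_3_general R₀ R₁ hR₀ a ha G hG
end

section
/- Let 0 ≤ R₀ < R₁, let a : ℤ → ℂ be a family of coefficients such that for every r with R₀ < r < R₁ the family (n ↦ ‖a(n)‖·rⁿ) is summable over ℤ, and let G(z) = ∑_{n∈ℤ} a(n)·zⁿ for z in the annulus A(R₀,R₁) = {z ∈ ℂ : R₀ < |z| < R₁}. Then G is holomorphic on A(R₀,R₁) and for every r with R₀ < r < R₁ its complex derivative G′ satisfies ∫₀^{2π} ‖G′(r·e^{iθ})‖² dθ = 2π·∑_{n∈ℤ} n²·‖a(n)‖²·r^{2n−2}. -/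
/-!
On the circle `z = r e^{iθ}` the function `z G'(z) = ∑ n aₙ rⁿ e^{inθ}` is an absolutely convergent
Fourier series: choosing `R₀ < r₀ < r < r₁ < R₁`, the weight `|n| rⁿ` is dominated by `r₀ⁿ + r₁ⁿ`
since `k qᵏ` is bounded for `q < 1`. Parseval's identity on `ℝ / 2πℤ` then gives
`∫ ‖z G'(z)‖² dθ = 2π ∑ n² ‖aₙ‖² r²ⁿ`, and `‖z‖ = r` lets us divide by `r²`. Holomorphy and
termwise differentiation come from locally uniform convergence: on the sub-annulus
`r₀ < ‖w‖ < r₁` each term is bounded by `‖aₙ‖ (r₀ⁿ + r₁ⁿ)`.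
-/

open Complex Real

open MeasureTheory AddCircle

theorem fourierCoeff_eq_of_hasSum {T : ℝ} [Fact (0 < T)] {c : ℤ → ℂ} {F : C(AddCircle T, ℂ)}
    (hF : HasSum (fun n => c n • fourier n) F) : fourierCoeff F = c := by
  ext n
  have hL2 : HasSum (fun m => c m • fourierLp 2 m) (ContinuousMap.toLp 2 haarAddCircle ℂ F) :=
    hF.mapL (ContinuousMap.toLp 2 haarAddCircle ℂ)
  have hinner := hL2.mapL (innerSL ℂ (fourierLp (T := T) 2 n))
  rw [← fourierCoeff_toLp, ← fourierBasis_repr, HilbertBasis.repr_apply_apply, coe_fourierBasis]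
  refine (hinner.unique (hasSum_single n fun m hm => ?_)).trans ?_
  · simp [orthonormal_fourier.2 hm.symm]
  · simp [orthonormal_fourier.1 n]

theorem tsum_sq_norm_eq_integral_of_hasSum_fourier {T : ℝ} [Fact (0 < T)] {c : ℤ → ℂ}
    {F : C(AddCircle T, ℂ)} (hF : HasSum (fun n => c n • fourier n) F) :
    ∑' n, ‖c n‖ ^ 2 = ∫ t, ‖F t‖ ^ 2 ∂haarAddCircle := by
  rw [← fourierCoeff_eq_of_hasSum hF]
  simp_rw [← fourierCoeff_toLp]
  rw [tsum_sq_fourierCoeff]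
  refine integral_congr_ae ?_
  filter_upwards [ContinuousMap.coeFn_toLp (p := 2) (𝕜 := ℂ) (μ := haarAddCircle) F] with t ht
  rw [ht]

theorem intervalIntegral_norm_sq_of_hasSum_exp {c : ℤ → ℂ} (hc : Summable fun n => ‖c n‖)
    {h : ℝ → ℂ} (hh : ∀ θ : ℝ, HasSum (fun n : ℤ => c n * exp (n * θ * I)) (h θ)) :
    ∫ θ in (0 : ℝ)..2 * π, ‖h θ‖ ^ 2 = 2 * π * ∑' n, ‖c n‖ ^ 2 := by
  have : Fact (0 < 2 * π) := ⟨two_pi_pos⟩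
  have hF : HasSum (fun n => c n • fourier n) (∑' n, c n • fourier (T := 2 * π) n) :=
    (Summable.of_norm (by simpa [norm_smul, fourier_norm] using hc)).hasSum
  set F := ∑' n, c n • fourier (T := 2 * π) n
  have hFh : ∀ θ : ℝ, F θ = h θ := fun θ => by
    refine (hF.mapL (ContinuousMap.evalCLM ℂ (θ : AddCircle (2 * π)))).unique ?_
    convert hh θ using 2 with n
    simp only [ContinuousMap.evalCLM_apply, ContinuousMap.smul_apply, smul_eq_mul,
      fourier_coe_apply]
    congr 2
    push_cast
    field_simp
  have hvol := AddCircle.intervalIntegral_preimage (2 * π) 0 fun t => ‖F t‖ ^ 2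
  rw [zero_add] at hvol
  simp only [hFh] at hvol
  rw [tsum_sq_norm_eq_integral_of_hasSum_fourier hF, integral_haarAddCircle, ← hvol, smul_eq_mul,
    mul_inv_cancel_left₀ two_pi_pos.ne']

theorem zpow_le_zpow_add_zpow {s₀ s₁ x : ℝ} (hs₀ : 0 < s₀) (h₀ : s₀ ≤ x) (h₁ : x ≤ s₁) (n : ℤ) :
    x ^ n ≤ s₀ ^ n + s₁ ^ n := by
  have hx : 0 < x := hs₀.trans_le h₀
  rcases le_or_gt 0 n with hn | hn
  · linarith [zpow_le_zpow_left₀ hn hx.le h₁, zpow_pos hs₀ n]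
  · have : x⁻¹ ^ (-n) ≤ s₀⁻¹ ^ (-n) :=
      zpow_le_zpow_left₀ (by omega) (inv_nonneg.2 hx.le) (inv_anti₀ hs₀ h₀)
    rw [inv_zpow', inv_zpow', neg_neg] at this
    linarith [zpow_pos (hs₀.trans_le (h₀.trans h₁)) n]

theorem exists_abs_mul_zpow_le {r₀ r r₁ : ℝ} (hr₀ : 0 < r₀) (h₀ : r₀ < r) (h₁ : r < r₁) :
    ∃ C, ∀ n : ℤ, |(n : ℝ)| * r ^ n ≤ C * (r₀ ^ n + r₁ ^ n) := by
  have hr : 0 < r := hr₀.trans h₀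
  have hr₁ : 0 < r₁ := hr.trans h₁
  set q := max (r / r₁) (r₀ / r)
  have hq : q < 1 := max_lt ((div_lt_one hr₁).2 h₁) ((div_lt_one hr).2 h₀)
  obtain ⟨C, hC⟩ := (tendsto_self_mul_const_pow_of_lt_one (by positivity : 0 ≤ q) hq).bddAbove_range
  have hC' : ∀ k : ℕ, (k : ℝ) * q ^ k ≤ C := fun k => hC ⟨k, rfl⟩
  have hC0 : 0 ≤ C := by simpa using hC' 0
  refine ⟨C, fun n => ?_⟩
  rcases Int.eq_nat_or_neg n with ⟨k, rfl | rfl⟩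
  · calc |((k : ℤ) : ℝ)| * r ^ (k : ℤ) = k * (r / r₁) ^ k * r₁ ^ k := by
          simp only [Int.cast_natCast, Nat.abs_cast, zpow_natCast, div_pow]
          field_simp
      _ ≤ C * r₁ ^ k := by gcongr; exact (hC' k).trans' (by gcongr; exact le_max_left _ _)
      _ ≤ C * (r₀ ^ (k : ℤ) + r₁ ^ (k : ℤ)) := by
          simp only [zpow_natCast]; gcongr; linarith [pow_pos hr₀ k]
  · calc |((-k : ℤ) : ℝ)| * r ^ (-k : ℤ) = k * (r₀ / r) ^ k * r₀ ^ (-k : ℤ) := by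
          simp only [Int.cast_neg, Int.cast_natCast, abs_neg, Nat.abs_cast, zpow_neg, zpow_natCast,
            div_pow]
          field_simp
      _ ≤ C * r₀ ^ (-k : ℤ) := by gcongr; exact (hC' k).trans' (by gcongr; exact le_max_right _ _)
      _ ≤ C * (r₀ ^ (-k : ℤ) + r₁ ^ (-k : ℤ)) := by
          gcongr; linarith [zpow_pos hr₁ (-k : ℤ)]

theorem summable_abs_mul_norm_mul_zpow {a : ℤ → ℂ} {r₀ r r₁ : ℝ} (hr₀ : 0 < r₀) (h₀ : r₀ < r)
    (h₁ : r < r₁) (hs₀ : Summable fun n => ‖a n‖ * r₀ ^ n)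
    (hs₁ : Summable fun n => ‖a n‖ * r₁ ^ n) :
    Summable fun n : ℤ => |(n : ℝ)| * ‖a n‖ * r ^ n := by
  obtain ⟨C, hC⟩ := exists_abs_mul_zpow_le hr₀ h₀ h₁
  have hr : 0 < r := hr₀.trans h₀
  refine Summable.of_nonneg_of_le (fun n => by positivity) (fun n => ?_)
    ((hs₀.add hs₁).mul_left C)
  calc |(n : ℝ)| * ‖a n‖ * r ^ n = ‖a n‖ * (|(n : ℝ)| * r ^ n) := by ring
    _ ≤ ‖a n‖ * (C * (r₀ ^ n + r₁ ^ n)) := mul_le_mul_of_nonneg_left (hC n) (norm_nonneg _)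
    _ = C * (‖a n‖ * r₀ ^ n + ‖a n‖ * r₁ ^ n) := by ring

def annulus (R₀ R₁ : ℝ) : Set ℂ := {z | R₀ < ‖z‖ ∧ ‖z‖ < R₁}

noncomputable def laurentSum (a : ℤ → ℂ) (z : ℂ) : ℂ := ∑' n, a n * z ^ n

theorem isOpen_annulus (R₀ R₁ : ℝ) : IsOpen (annulus R₀ R₁) :=
  isOpen_Ioo.preimage continuous_norm

theorem ne_zero_of_mem_annulus {R₀ R₁ : ℝ} (hR₀ : 0 ≤ R₀) {z : ℂ} (hz : z ∈ annulus R₀ R₁) :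
    z ≠ 0 :=
  norm_pos_iff.1 (hR₀.trans_lt hz.1)

theorem ofReal_mul_exp_mem_annulus {R₀ R₁ r : ℝ} (h₀ : R₀ < r) (h₁ : r < R₁) (hr : 0 ≤ r)
    (θ : ℝ) : (r : ℂ) * exp (θ * I) ∈ annulus R₀ R₁ := by
  simpa [annulus, norm_exp_ofReal_mul_I, abs_of_nonneg hr] using ⟨h₀, h₁⟩

section SubAnnulus

variable {a : ℤ → ℂ} {s₀ s₁ : ℝ}

theorem norm_mul_zpow_le (hs₀ : 0 < s₀) {w : ℂ} (hw : w ∈ annulus s₀ s₁) (n : ℤ) :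
    ‖a n * w ^ n‖ ≤ ‖a n‖ * (s₀ ^ n + s₁ ^ n) := by
  rw [norm_mul, norm_zpow]
  exact mul_le_mul_of_nonneg_left (zpow_le_zpow_add_zpow hs₀ hw.1.le hw.2.le n) (norm_nonneg _)

theorem differentiableOn_mul_zpow (hs₀ : 0 ≤ s₀) (n : ℤ) :
    DifferentiableOn ℂ (fun w : ℂ => a n * w ^ n) (annulus s₀ s₁) := fun _ hw =>
  ((differentiableAt_zpow.2 (.inl (ne_zero_of_mem_annulus hs₀ hw))).const_mul _)
    |>.differentiableWithinAt

theorem summable_norm_mul_zpow_add (h₀ : Summable fun n => ‖a n‖ * s₀ ^ n)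
    (h₁ : Summable fun n => ‖a n‖ * s₁ ^ n) :
    Summable fun n => ‖a n‖ * (s₀ ^ n + s₁ ^ n) := by
  simpa only [mul_add] using h₀.add h₁

theorem differentiableOn_laurentSum_of_summable (hs₀ : 0 < s₀)
    (h₀ : Summable fun n => ‖a n‖ * s₀ ^ n) (h₁ : Summable fun n => ‖a n‖ * s₁ ^ n) :
    DifferentiableOn ℂ (laurentSum a) (annulus s₀ s₁) :=
  differentiableOn_tsum_of_summable_norm (summable_norm_mul_zpow_add h₀ h₁)
    (differentiableOn_mul_zpow hs₀.le) (isOpen_annulus s₀ s₁)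
    fun n _ hw => norm_mul_zpow_le hs₀ hw n

theorem hasSum_deriv_laurentSum_of_summable (hs₀ : 0 < s₀)
    (h₀ : Summable fun n => ‖a n‖ * s₀ ^ n) (h₁ : Summable fun n => ‖a n‖ * s₁ ^ n)
    {z : ℂ} (hz : z ∈ annulus s₀ s₁) :
    HasSum (fun n => a n * (n * z ^ (n - 1))) (deriv (laurentSum a) z) := by
  have hterms := hasSum_deriv_of_summable_norm (summable_norm_mul_zpow_add h₀ h₁)
    (differentiableOn_mul_zpow hs₀.le) (isOpen_annulus s₀ s₁)
    (fun n _ hw => norm_mul_zpow_le hs₀ hw n) hz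
  simp only [deriv_const_mul_field', deriv_zpow] at hterms
  exact hterms

end SubAnnulus

section Annulus

variable {R₀ R₁ : ℝ} {a : ℤ → ℂ}

theorem exists_summable_annulus_of_mem (hR₀ : 0 ≤ R₀)
    (ha : ∀ r : ℝ, R₀ < r → r < R₁ → Summable (fun n : ℤ => ‖a n‖ * r ^ n))
    {z : ℂ} (hz : z ∈ annulus R₀ R₁) :
    ∃ s₀ s₁, 0 < s₀ ∧ Summable (fun n : ℤ => ‖a n‖ * s₀ ^ n) ∧
      Summable (fun n : ℤ => ‖a n‖ * s₁ ^ n) ∧ z ∈ annulus s₀ s₁ := by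
  obtain ⟨hz₀, hz₁⟩ := hz
  refine ⟨(R₀ + ‖z‖) / 2, (‖z‖ + R₁) / 2, by linarith, ha _ ?_ ?_, ha _ ?_ ?_, ?_, ?_⟩ <;> linarith

theorem differentiableOn_laurentSum (hR₀ : 0 ≤ R₀)
    (ha : ∀ r : ℝ, R₀ < r → r < R₁ → Summable (fun n : ℤ => ‖a n‖ * r ^ n)) :
    DifferentiableOn ℂ (laurentSum a) (annulus R₀ R₁) := fun z hz => by
  obtain ⟨s₀, s₁, hs₀, h₀, h₁, hz'⟩ := exists_summable_annulus_of_mem hR₀ ha hz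
  exact ((differentiableOn_laurentSum_of_summable hs₀ h₀ h₁).differentiableAt
    ((isOpen_annulus s₀ s₁).mem_nhds hz')).differentiableWithinAt

theorem hasSum_deriv_laurentSum (hR₀ : 0 ≤ R₀)
    (ha : ∀ r : ℝ, R₀ < r → r < R₁ → Summable (fun n : ℤ => ‖a n‖ * r ^ n))
    {z : ℂ} (hz : z ∈ annulus R₀ R₁) :
    HasSum (fun n => a n * (n * z ^ (n - 1))) (deriv (laurentSum a) z) := by
  obtain ⟨s₀, s₁, hs₀, h₀, h₁, hz'⟩ := exists_summable_annulus_of_mem hR₀ ha hz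
  exact hasSum_deriv_laurentSum_of_summable hs₀ h₀ h₁ hz'

end Annulus

section Circle

variable {R₀ R₁ : ℝ} {a : ℤ → ℂ}

theorem hasSum_mul_deriv_laurentSum_circle (hR₀ : 0 ≤ R₀)
    (ha : ∀ r : ℝ, R₀ < r → r < R₁ → Summable (fun n : ℤ => ‖a n‖ * r ^ n))
    {r : ℝ} (h₀ : R₀ < r) (h₁ : r < R₁) (θ : ℝ) :
    HasSum (fun n : ℤ => n * a n * r ^ n * exp (n * θ * I))
      (r * exp (θ * I) * deriv (laurentSum a) (r * exp (θ * I))) := by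
  have hz := ofReal_mul_exp_mem_annulus h₀ h₁ (hR₀.trans h₀.le) θ
  have hz0 := ne_zero_of_mem_annulus hR₀ hz
  have hr : (r : ℂ) ≠ 0 := left_ne_zero_of_mul hz0
  refine ((hasSum_deriv_laurentSum hR₀ ha hz).mul_left _).congr_fun fun n => ?_
  rw [zpow_sub_one₀ hz0, mul_zpow, ← exp_int_mul]
  field_simp

theorem intervalIntegral_norm_sq_deriv_laurentSum (hR₀ : 0 ≤ R₀)
    (ha : ∀ r : ℝ, R₀ < r → r < R₁ → Summable (fun n : ℤ => ‖a n‖ * r ^ n))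
    {r : ℝ} (h₀ : R₀ < r) (h₁ : r < R₁) :
    ∫ θ in (0 : ℝ)..2 * π, ‖deriv (laurentSum a) (r * exp (θ * I))‖ ^ 2 =
      2 * π * ∑' n : ℤ, (n : ℝ) ^ 2 * ‖a n‖ ^ 2 * r ^ (2 * n - 2) := by
  have hr : 0 < r := hR₀.trans_lt h₀
  have hnorm : ∀ n : ℤ, ‖(n : ℂ) * a n * r ^ n‖ = |(n : ℝ)| * ‖a n‖ * r ^ n := fun n => by
    simp [norm_zpow, abs_of_pos hr]
  have hc : Summable fun n : ℤ => ‖(n : ℂ) * a n * r ^ n‖ := by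
    simp only [hnorm]
    exact summable_abs_mul_norm_mul_zpow (r₀ := (R₀ + r) / 2) (r₁ := (r + R₁) / 2)
      (by linarith) (by linarith) (by linarith) (ha _ (by linarith) (by linarith))
      (ha _ (by linarith) (by linarith))
  have hP := intervalIntegral_norm_sq_of_hasSum_exp hc
    (hasSum_mul_deriv_laurentSum_circle hR₀ ha h₀ h₁)
  refine mul_left_cancel₀ (pow_ne_zero 2 hr.ne') ?_
  calc r ^ 2 * ∫ θ in (0 : ℝ)..2 * π, ‖deriv (laurentSum a) (r * exp (θ * I))‖ ^ 2
      = ∫ θ in (0 : ℝ)..2 * π,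
          ‖r * exp (θ * I) * deriv (laurentSum a) (r * exp (θ * I))‖ ^ 2 := by
        rw [← intervalIntegral.integral_const_mul]
        simp [norm_exp_ofReal_mul_I, abs_of_pos hr, mul_pow]
    _ = 2 * π * ∑' n : ℤ, ‖(n : ℂ) * a n * r ^ n‖ ^ 2 := hP
    _ = r ^ 2 * (2 * π * ∑' n : ℤ, (n : ℝ) ^ 2 * ‖a n‖ ^ 2 * r ^ (2 * n - 2)) := by
        rw [mul_left_comm (r ^ 2)]
        congr 1
        rw [← tsum_mul_left]
        refine tsum_congr fun (n : ℤ) => ?_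
        have hpow : (r ^ n) ^ 2 = r ^ 2 * r ^ (2 * n - 2) := by
          rw [← zpow_natCast, ← zpow_mul, ← zpow_natCast, ← zpow_add₀ hr.ne']
          ring_nf
        rw [hnorm, mul_pow, mul_pow, sq_abs, hpow]
        ring

end Circle

theorem stmt_4_general (R₀ R₁ : ℝ) (hR₀ : 0 ≤ R₀) (a : ℤ → ℂ)
    (ha : ∀ r : ℝ, R₀ < r → r < R₁ → Summable (fun n : ℤ => ‖a n‖ * r ^ n))
    (G : ℂ → ℂ)
    (hG : ∀ z : ℂ, R₀ < ‖z‖ → ‖z‖ < R₁ →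
      G z = ∑' n : ℤ, a n * z ^ n) :
    DifferentiableOn ℂ G {z : ℂ | R₀ < ‖z‖ ∧ ‖z‖ < R₁} ∧
    ∀ r : ℝ, R₀ < r → r < R₁ →
      ∫ θ in (0:ℝ)..(2 * π),
          ‖deriv G ((r : ℂ) * Complex.exp (θ * Complex.I))‖ ^ 2
        = 2 * π * ∑' n : ℤ, (n : ℝ) ^ 2 * ‖a n‖ ^ 2 * r ^ (2 * n - 2) := by
  have hEq : Set.EqOn G (laurentSum a) (annulus R₀ R₁) := fun z hz => hG z hz.1 hz.2
  have hderiv : ∀ z ∈ annulus R₀ R₁, deriv G z = deriv (laurentSum a) z := fun z hz =>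
    (Filter.eventuallyEq_of_mem ((isOpen_annulus R₀ R₁).mem_nhds hz) hEq).deriv_eq
  refine ⟨(differentiableOn_laurentSum hR₀ ha).congr hEq, fun r h₀ h₁ => ?_⟩
  rw [← intervalIntegral_norm_sq_deriv_laurentSum hR₀ ha h₀ h₁]
  congr with θ
  rw [hderiv _ (ofReal_mul_exp_mem_annulus h₀ h₁ (hR₀.trans h₀.le) θ)]

/-- A Laurent series on an annulus is holomorphic there and its derivative
satisfies `∫₀^{2π} ‖G′(r e^{iθ})‖² dθ = 2π ∑_{n∈ℤ} n² ‖a n‖² r^{2n-2}`. -/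
theorem stmt_4 (R₀ R₁ : ℝ) (hR₀ : 0 ≤ R₀) (hR : R₀ < R₁) (a : ℤ → ℂ)
    (ha : ∀ r : ℝ, R₀ < r → r < R₁ → Summable (fun n : ℤ => ‖a n‖ * r ^ n))
    (G : ℂ → ℂ)
    (hG : ∀ z : ℂ, R₀ < ‖z‖ → ‖z‖ < R₁ →
      G z = ∑' n : ℤ, a n * z ^ n) :
    DifferentiableOn ℂ G {z : ℂ | R₀ < ‖z‖ ∧ ‖z‖ < R₁} ∧
    ∀ r : ℝ, R₀ < r → r < R₁ →
      ∫ θ in (0:ℝ)..(2 * π),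
          ‖deriv G ((r : ℂ) * Complex.exp (θ * Complex.I))‖ ^ 2
        = 2 * π * ∑' n : ℤ, (n : ℝ) ^ 2 * ‖a n‖ ^ 2 * r ^ (2 * n - 2) :=
  stmt_4_general R₀ R₁ hR₀ a ha G hG
end

section
/- Let 0 ≤ R₀ < R₁ and let G : ℂ → ℂ be holomorphic on the annulus A(R₀,R₁) = {z ∈ ℂ : R₀ < |z| < R₁}. Then for every r with R₀ < r < R₁, one has r²·∫₀^{2π} ‖G′(r·e^{iθ})‖² dθ ≥ ∫₀^{2π} ‖G(r·e^{iθ})‖² dθ − (1/(2π))·‖∫₀^{2π} G(r·e^{iθ}) dθ‖², where G′ is the complex derivative of G. -/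
/-!
On `[a, b]`, Parseval's identity writes `(b - a)⁻¹ ∫ ‖f‖²` as `∑ ‖cₙ(f)‖²`, and `c₀(f)` is the mean
of `f`. When `f a = f b`, integration by parts gives `cₙ(f) = (b - a) / (2πin) · cₙ(f')` for
`n ≠ 0`, so dropping the `n = 0` term yields Wirtinger's inequality
`∫ ‖f‖² - (b - a)⁻¹ ‖∫ f‖² ≤ ((b - a) / 2π)² ∫ ‖f'‖²`.
Applied to `θ ↦ G (r e^{iθ})` on `[0, 2π]`, whose derivative has norm `r ‖G' (r e^{iθ})‖`,
this is the theorem.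
-/

open Complex Real MeasureTheory Set Function

theorem ContinuousOn.memLp_restrict_of_isCompact {X E : Type*} [TopologicalSpace X]
    [MeasurableSpace X] [OpensMeasurableSpace X] [NormedAddCommGroup E]
    [SecondCountableTopologyEither X E] {μ : Measure X} [IsFiniteMeasureOnCompacts μ]
    {s t : Set X} {f : X → E} (hf : ContinuousOn f s) (hs : IsCompact s) (hts : t ⊆ s)
    (ht : MeasurableSet t) (p : ENNReal) : MemLp f p (μ.restrict t) := by
  have : IsFiniteMeasure (μ.restrict t) :=
    isFiniteMeasure_restrict.2 ((measure_mono hts).trans_lt hs.measure_lt_top).ne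
  obtain ⟨C, hC⟩ := hs.exists_bound_of_continuousOn hf
  exact .of_bound ((hf.mono hts).aestronglyMeasurable ht) C
    ((ae_restrict_iff' ht).2 (ae_of_all _ fun x hx => hC x (hts hx)))

theorem norm_fourierCoeffOn_le_of_hasDerivAt {a b : ℝ} (hab : a < b) {f f' : ℝ → ℂ}
    (hfab : f a = f b) (hf : ∀ x ∈ Icc a b, HasDerivAt f (f' x) x)
    (hf' : IntervalIntegrable f' volume a b) {n : ℤ} (hn : n ≠ 0) :
    ‖fourierCoeffOn hab f n‖ ≤ (b - a) / (2 * π) * ‖fourierCoeffOn hab f' n‖ := by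
  rw [fourierCoeffOn_of_hasDerivAt hab hn (uIcc_of_le hab.le ▸ hf) hf', hfab, sub_self, mul_zero,
    zero_sub]
  have hn1 : (1 : ℝ) ≤ |(n : ℝ)| := by exact_mod_cast Int.one_le_abs hn
  have hnorm : ‖(1 : ℂ) / (-2 * π * I * n)‖ * ‖((b : ℂ) - a)‖ = (b - a) / (2 * π) / |(n : ℝ)| := by
    rw [← ofReal_sub, norm_real, Real.norm_of_nonneg (sub_pos.2 hab).le]
    simp [abs_of_pos pi_pos, field]
  rw [norm_mul, norm_neg, norm_mul, ← mul_assoc, hnorm]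
  exact mul_le_mul_of_nonneg_right
    (div_le_self (div_nonneg (sub_pos.2 hab).le two_pi_pos.le) hn1) (norm_nonneg _)

theorem fourierCoeffOn_zero {a b : ℝ} (hab : a < b) (f : ℝ → ℂ) :
    fourierCoeffOn hab f 0 = (b - a)⁻¹ • ∫ x in a..b, f x := by
  simp [fourierCoeffOn_eq_integral]

theorem wirtinger_inequality {a b : ℝ} (hab : a < b) {f f' : ℝ → ℂ}
    (hfab : f a = f b) (hf : ∀ x ∈ Icc a b, HasDerivAt f (f' x) x)
    (hf' : MemLp f' 2 (volume.restrict (Ioc a b))) :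
    (∫ x in a..b, ‖f x‖ ^ 2) - (b - a)⁻¹ * ‖∫ x in a..b, f x‖ ^ 2
      ≤ ((b - a) / (2 * π)) ^ 2 * ∫ x in a..b, ‖f' x‖ ^ 2 := by
  have hL : 0 < b - a := sub_pos.2 hab
  have hf'int : IntervalIntegrable f' volume a b :=
    (intervalIntegrable_iff_integrableOn_Ioc_of_le hab.le).2 (hf'.integrable one_le_two)
  have hfL2 : MemLp f 2 (volume.restrict (Ioc a b)) :=
    ContinuousOn.memLp_restrict_of_isCompact
      (fun x hx => (hf x hx).continuousAt.continuousWithinAt) isCompact_Icc Ioc_subset_Icc_self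
      measurableSet_Ioc 2
  have hsum : HasSum (update (fun n => ‖fourierCoeffOn hab f n‖ ^ 2) 0 0)
      ((b - a)⁻¹ • (∫ x in a..b, ‖f x‖ ^ 2) - ‖fourierCoeffOn hab f 0‖ ^ 2) := by
    simpa [sub_eq_neg_add] using (hasSum_sq_fourierCoeffOn hab hfL2).update 0 0
  have hsum' := (hasSum_sq_fourierCoeffOn hab hf').mul_left (((b - a) / (2 * π)) ^ 2)
  have hle := hasSum_le (fun n => ?_) hsum hsum'
  · rw [fourierCoeffOn_zero, norm_smul, mul_pow, smul_eq_mul, smul_eq_mul] at hle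
    simp only [norm_inv, Real.norm_eq_abs, abs_of_pos hL] at hle
    generalize (∫ x in a..b, ‖f x‖ ^ 2) = A at hle ⊢
    generalize ‖∫ x in a..b, f x‖ ^ 2 = B at hle ⊢
    generalize (∫ x in a..b, ‖f' x‖ ^ 2) = C at hle ⊢
    calc A - (b - a)⁻¹ * B = (b - a) * ((b - a)⁻¹ * A - (b - a)⁻¹ ^ 2 * B) := by
          field_simp
      _ ≤ (b - a) * (((b - a) / (2 * π)) ^ 2 * ((b - a)⁻¹ * C)) := by gcongr
      _ = ((b - a) / (2 * π)) ^ 2 * C := by field_simp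
  · rcases eq_or_ne n 0 with rfl | hn
    · simp only [update_self]; positivity
    · rw [update_of_ne hn, ← mul_pow]
      exact pow_le_pow_left₀ (norm_nonneg _)
        (norm_fourierCoeffOn_le_of_hasDerivAt hab hfab hf hf'int hn) 2

theorem hasDerivAt_comp_circleMap {G : ℂ → ℂ} {U : Set ℂ} (hU : IsOpen U)
    (hG : DifferentiableOn ℂ G U) {c : ℂ} {r : ℝ} (hcU : ∀ θ, circleMap c r θ ∈ U) (θ : ℝ) :
    HasDerivAt (G ∘ circleMap c r) (deriv G (circleMap c r θ) * (circleMap 0 r θ * I)) θ :=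
  ((hG.differentiableAt (hU.mem_nhds (hcU θ))).hasDerivAt).comp θ (hasDerivAt_circleMap c r θ)

theorem continuous_deriv_comp_circleMap {G : ℂ → ℂ} {U : Set ℂ} (hU : IsOpen U)
    (hG : DifferentiableOn ℂ G U) {c : ℂ} {r : ℝ} (hcU : ∀ θ, circleMap c r θ ∈ U) :
    Continuous fun θ => deriv G (circleMap c r θ) :=
  (hG.deriv hU).continuousOn.comp_continuous (continuous_circleMap c r) hcU

theorem stmt_7_general (R₀ R₁ : ℝ) (hR₀ : 0 ≤ R₀) (G : ℂ → ℂ)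
    (hG : DifferentiableOn ℂ G
      {z : ℂ | R₀ < ‖z‖ ∧ ‖z‖ < R₁}) :
    ∀ r : ℝ, R₀ < r → r < R₁ →
      r ^ 2 * ∫ θ in (0:ℝ)..(2 * π),
          ‖deriv G ((r : ℂ) * Complex.exp (θ * Complex.I))‖ ^ 2
        ≥ (∫ θ in (0:ℝ)..(2 * π),
            ‖G ((r : ℂ) * Complex.exp (θ * Complex.I))‖ ^ 2)
          - (1 / (2 * π)) *
            ‖∫ θ in (0:ℝ)..(2 * π),
              G ((r : ℂ) * Complex.exp (θ * Complex.I))‖ ^ 2 := by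
  intro r hr₀ hr₁
  have hU : IsOpen {z : ℂ | R₀ < ‖z‖ ∧ ‖z‖ < R₁} :=
    (isOpen_lt continuous_const continuous_norm).inter (isOpen_lt continuous_norm continuous_const)
  have hcU : ∀ θ, circleMap 0 r θ ∈ {z : ℂ | R₀ < ‖z‖ ∧ ‖z‖ < R₁} := fun θ => by
    simp [norm_circleMap_zero, abs_of_pos (hR₀.trans_lt hr₀), hr₀, hr₁]
  have hf' : Continuous fun θ => deriv G (circleMap 0 r θ) * (circleMap 0 r θ * I) :=
    (continuous_deriv_comp_circleMap hU hG hcU).mul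
      ((continuous_circleMap 0 r).mul continuous_const)
  have h := wirtinger_inequality two_pi_pos (by simp [(periodic_circleMap 0 r).eq])
    (fun θ _ => hasDerivAt_comp_circleMap hU hG hcU θ)
    (hf'.continuousOn.memLp_restrict_of_isCompact isCompact_Icc Ioc_subset_Icc_self
      measurableSet_Ioc 2)
  simp only [comp_apply, circleMap_zero, norm_mul, norm_I, mul_one, norm_real, mul_pow,
    norm_exp_ofReal_mul_I, Real.norm_eq_abs, sq_abs, intervalIntegral.integral_mul_const, sub_zero,
    div_self two_pi_pos.ne', one_pow, one_mul] at h
  rwa [ge_iff_le, one_div, mul_comm (r ^ 2)]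

/-- Osserman–Schiffer type inequality: for `G` holomorphic on an annulus,
`r² ∫₀^{2π} ‖G′‖² dθ ≥ ∫₀^{2π} ‖G‖² dθ − (1/(2π)) ‖∫₀^{2π} G dθ‖²`. -/
theorem stmt_7 (R₀ R₁ : ℝ) (hR₀ : 0 ≤ R₀) (hR : R₀ < R₁) (G : ℂ → ℂ)
    (hG : DifferentiableOn ℂ G
      {z : ℂ | R₀ < ‖z‖ ∧ ‖z‖ < R₁}) :
    ∀ r : ℝ, R₀ < r → r < R₁ →
      r ^ 2 * ∫ θ in (0:ℝ)..(2 * π),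
          ‖deriv G ((r : ℂ) * Complex.exp (θ * Complex.I))‖ ^ 2
        ≥ (∫ θ in (0:ℝ)..(2 * π),
            ‖G ((r : ℂ) * Complex.exp (θ * Complex.I))‖ ^ 2)
          - (1 / (2 * π)) *
            ‖∫ θ in (0:ℝ)..(2 * π),
              G ((r : ℂ) * Complex.exp (θ * Complex.I))‖ ^ 2 :=
  stmt_7_general R₀ R₁ hR₀ G hG
end

section
/- Let 0 ≤ R₀ < R₁ and let G : ℂ → ℂ be holomorphic on the annulus A(R₀,R₁) = {z ∈ ℂ : R₀ < |z| < R₁}. Suppose that ∫₀^{2π} G(r·e^{iθ})² dθ = 0 for some r with R₀ < r < R₁. Then for every ρ with R₀ < ρ < R₁, ‖∫₀^{2π} G(ρ·e^{iθ}) dθ‖² ≤ π·∫₀^{2π} ‖G(ρ·e^{iθ})‖² dθ. -/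
/-!
Since `z ↦ G z ^ 2` is holomorphic on the annulus, its circle averages do not depend on the
radius, so `∫ G(ρ e^{iθ})² dθ = 0` on every circle. Writing `f θ = G(ρ e^{iθ})` and `m` for the
mean of `f` over `[0, 2π]`, the vanishing of `∫ f²` gives `∫ (f - m)² = -2π m²`, so
`2π ‖m‖² ≤ ∫ ‖f - m‖² = ∫ ‖f‖² - 2π ‖m‖²`, which is `‖∫ f‖² = 4π² ‖m‖² ≤ π ∫ ‖f‖²`.
-/

open Complex Real Set Metric intervalIntegral ComplexConjugate
open MeasureTheory (volume)

section IntervalIntegral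

variable {f : ℝ → ℂ} {a b : ℝ}

lemma integral_sub_const_sq (hf : IntervalIntegrable f volume a b)
    (hf₂ : IntervalIntegrable (fun x => f x ^ 2) volume a b) (c : ℂ) :
    ∫ x in a..b, (f x - c) ^ 2
      = (∫ x in a..b, f x ^ 2) - 2 * c * (∫ x in a..b, f x) + (b - a) • c ^ 2 := by
  have hc : IntervalIntegrable (fun x => 2 * c * f x) volume a b := hf.const_mul _
  simp_rw [sub_sq, mul_right_comm _ (f _), integral_add (hf₂.sub hc) intervalIntegrable_const,
    integral_sub hf₂ hc, integral_const_mul, integral_const]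

lemma integral_norm_sub_const_sq (hf : IntervalIntegrable f volume a b)
    (hf₂ : IntervalIntegrable (fun x => ‖f x‖ ^ 2) volume a b) (c : ℂ) :
    ∫ x in a..b, ‖f x - c‖ ^ 2
      = (∫ x in a..b, ‖f x‖ ^ 2) - 2 * ((∫ x in a..b, f x) * conj c).re + (b - a) * ‖c‖ ^ 2 := by
  have hfc : IntervalIntegrable (fun x => f x * conj c) volume a b := hf.mul_const _
  have hre : ((∫ x in a..b, f x) * conj c).re = ∫ x in a..b, (f x * conj c).re := by
    rw [← integral_mul_const]
    exact (intervalIntegral_re hfc).symm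
  have hc : IntervalIntegrable (fun x => 2 * (f x * conj c).re) volume a b :=
    (intervalIntegrable_iff.2 hfc.def'.re).const_mul 2
  simp_rw [← Complex.normSq_eq_norm_sq] at hf₂ ⊢
  simp_rw [Complex.normSq_sub, sub_add_eq_add_sub,
    integral_sub (hf₂.add intervalIntegrable_const) hc, integral_add hf₂ intervalIntegrable_const,
    integral_const_mul, integral_const, hre, smul_eq_mul]

theorem sq_norm_integral_le_of_integral_sq_eq_zero (hab : a ≤ b) (hf : ContinuousOn f (uIcc a b))
    (h : ∫ x in a..b, f x ^ 2 = 0) :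
    ‖∫ x in a..b, f x‖ ^ 2 ≤ (b - a) / 2 * ∫ x in a..b, ‖f x‖ ^ 2 := by
  rcases hab.eq_or_lt with rfl | hlt
  · simp
  set L := b - a
  have hL : 0 < L := sub_pos.2 hlt
  set m := (∫ x in a..b, f x) / L
  have hI : ∫ x in a..b, f x = L * m := (mul_div_cancel₀ _ (by exact_mod_cast hL.ne')).symm
  have hvar := norm_integral_le_integral_norm (f := fun x => (f x - m) ^ 2) (μ := volume) hab
  simp only [norm_pow] at hvar
  rw [integral_sub_const_sq hf.intervalIntegrable (hf.pow 2).intervalIntegrable,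
    integral_norm_sub_const_sq hf.intervalIntegrable (hf.norm.pow 2).intervalIntegrable, h,
    hI] at hvar
  have e₁ : (0 : ℂ) - 2 * m * (L * m) + L • m ^ 2 = -(L * m ^ 2) := by
    rw [Complex.real_smul]; ring
  have e₂ : (L * m * conj m).re = L * ‖m‖ ^ 2 := by
    rw [mul_assoc, Complex.mul_conj, ← Complex.ofReal_mul, Complex.ofReal_re,
      Complex.normSq_eq_norm_sq]
  rw [e₁, e₂, norm_neg, norm_mul, norm_pow, Complex.norm_real, Real.norm_of_nonneg hL.le] at hvar
  rw [hI, norm_mul, Complex.norm_real, Real.norm_of_nonneg hL.le]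
  nlinarith [mul_le_mul_of_nonneg_left hvar hL.le]

end IntervalIntegral

theorem circleAverage_eq_of_differentiableOn_annulus {E : Type*} [NormedAddCommGroup E]
    [NormedSpace ℂ E] [CompleteSpace E] {f : ℂ → E} {c : ℂ} {R₀ R₁ r₁ r₂ : ℝ} (hR₀ : 0 ≤ R₀)
    (hf : DifferentiableOn ℂ f (ball c R₁ \ closedBall c R₀))
    (hr₁ : r₁ ∈ Ioo R₀ R₁) (hr₂ : r₂ ∈ Ioo R₀ R₁) :
    circleAverage f c r₁ = circleAverage f c r₂ := by
  wlog hle : r₁ ≤ r₂ generalizing r₁ r₂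
  · exact (this hr₂ hr₁ (le_of_not_ge hle)).symm
  have hpos : 0 < r₁ := hR₀.trans_lt hr₁.1
  rw [circleAverage_eq_circleIntegral hpos.ne',
    circleAverage_eq_circleIntegral (hpos.trans_le hle).ne']
  refine congrArg _
    (circleIntegral_sub_center_inv_smul_eq_of_differentiable_on_annulus_off_countable
      hpos hle countable_empty (hf.continuousOn.mono ?_) fun z hz => ?_).symm
  · exact sdiff_subset_sdiff (closedBall_subset_ball hr₂.2) (closedBall_subset_ball hr₁.1)
  · have hz' : z ∈ ball c R₁ \ closedBall c R₀ :=
      sdiff_subset_sdiff (ball_subset_ball hr₂.2.le) (closedBall_subset_closedBall hr₁.1.le) hz.1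
    exact hf.differentiableAt ((isOpen_ball.sdiff isClosed_closedBall).mem_nhds hz')

theorem stmt_10_general (R₀ R₁ : ℝ) (hR₀ : 0 ≤ R₀) (G : ℂ → ℂ)
    (hG : DifferentiableOn ℂ G
      {z : ℂ | R₀ < ‖z‖ ∧ ‖z‖ < R₁})
    (r : ℝ) (hr₀ : R₀ < r) (hr₁ : r < R₁)
    (hint : ∫ θ in (0:ℝ)..(2 * π),
        (G ((r : ℂ) * Complex.exp (θ * Complex.I))) ^ 2 = 0) :
    ∀ ρ : ℝ, R₀ < ρ → ρ < R₁ →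
      ‖∫ θ in (0:ℝ)..(2 * π), G ((ρ : ℂ) * Complex.exp (θ * Complex.I))‖ ^ 2
        ≤ π * ∫ θ in (0:ℝ)..(2 * π),
            ‖G ((ρ : ℂ) * Complex.exp (θ * Complex.I))‖ ^ 2 := by
  intro ρ hρ₀ hρ₁
  have hann : {z : ℂ | R₀ < ‖z‖ ∧ ‖z‖ < R₁} = ball 0 R₁ \ closedBall 0 R₀ := by
    ext z; simp [and_comm]
  rw [hann] at hG
  have hsq : ∫ θ in (0:ℝ)..(2 * π), G ((ρ : ℂ) * Complex.exp (θ * Complex.I)) ^ 2 = 0 := by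
    have := circleAverage_eq_of_differentiableOn_annulus hR₀ (hG.pow 2) ⟨hr₀, hr₁⟩ ⟨hρ₀, hρ₁⟩
    simpa [circleAverage_def, circleMap_zero, hint, pi_ne_zero] using this.symm
  have hcont : Continuous fun θ : ℝ => G ((ρ : ℂ) * Complex.exp (θ * Complex.I)) := by
    refine hG.continuousOn.comp_continuous (by fun_prop) fun θ => ?_
    simp [abs_of_pos (hR₀.trans_lt hρ₀), hρ₀, hρ₁]
  simpa using sq_norm_integral_le_of_integral_sq_eq_zero two_pi_pos.le hcont.continuousOn hsq

/-- If the circle integral of `G²` vanishes on some circle in the annulus, then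
on every circle `‖∫₀^{2π} G dθ‖² ≤ π ∫₀^{2π} ‖G‖² dθ`. -/
theorem stmt_10 (R₀ R₁ : ℝ) (hR₀ : 0 ≤ R₀) (hR : R₀ < R₁) (G : ℂ → ℂ)
    (hG : DifferentiableOn ℂ G
      {z : ℂ | R₀ < ‖z‖ ∧ ‖z‖ < R₁})
    (r : ℝ) (hr₀ : R₀ < r) (hr₁ : r < R₁)
    (hint : ∫ θ in (0:ℝ)..(2 * π),
        (G ((r : ℂ) * Complex.exp (θ * Complex.I))) ^ 2 = 0) :
    ∀ ρ : ℝ, R₀ < ρ → ρ < R₁ →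
      ‖∫ θ in (0:ℝ)..(2 * π), G ((ρ : ℂ) * Complex.exp (θ * Complex.I))‖ ^ 2
        ≤ π * ∫ θ in (0:ℝ)..(2 * π),
            ‖G ((ρ : ℂ) * Complex.exp (θ * Complex.I))‖ ^ 2 :=
  stmt_10_general R₀ R₁ hR₀ G hG r hr₀ hr₁ hint
end

section
/- Let 0 ≤ R₀ < R₁ and let G : ℂ → ℂ be holomorphic on the annulus A(R₀,R₁) = {z ∈ ℂ : R₀ < |z| < R₁}. Suppose that ∫₀^{2π} G(r·e^{iθ})² dθ = 0 for some r with R₀ < r < R₁. Then for every ρ with R₀ < ρ < R₁, 2·ρ²·∫₀^{2π} ‖G′(ρ·e^{iθ})‖² dθ ≥ ∫₀^{2π} ‖G(ρ·e^{iθ})‖² dθ, where G′ is the complex derivative of G. -/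
/-!
Since `G²` is holomorphic on the annulus, its circle average does not depend on the radius, so
`∫₀^{2π} G(ρe^{iθ})² dθ = 0` on every circle. Fix such a circle and let `cₙ` be the Fourier
coefficients of `u(θ) = G(ρe^{iθ})`. Then `u' = iρe^{iθ} G'(ρe^{iθ})` has coefficients `i n cₙ`,
and `∫ u² = 0` says `∑ c₋ₙ cₙ = 0`. Hence `|c₀|² ≤ ∑_{n≠0} |c₋ₙ| |cₙ| ≤ ∑_{n≠0} |cₙ|²`, so
`∑ |cₙ|² ≤ 2 ∑_{n≠0} |cₙ|² ≤ 2 ∑ n² |cₙ|²`, which is the claim by Parseval.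
-/

open Complex Real Set Metric MeasureTheory
open scoped ComplexConjugate Interval ENNReal

theorem ContinuousOn.memLp_restrict_Ioc {E : Type*} [NormedAddCommGroup E] {f : ℝ → E} {a b : ℝ}
    (hf : ContinuousOn f (Icc a b)) (p : ℝ≥0∞) : MemLp f p (volume.restrict (Ioc a b)) := by
  obtain ⟨C, hC⟩ := isCompact_Icc.exists_bound_of_continuousOn hf
  refine MemLp.of_bound ((hf.mono Ioc_subset_Icc_self).aestronglyMeasurable measurableSet_Ioc) C ?_
  exact (ae_restrict_iff' measurableSet_Ioc).mpr
    (Filter.Eventually.of_forall fun x hx => hC x (Ioc_subset_Icc_self hx))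

theorem hasSum_conj_fourierCoeffOn_mul {a b : ℝ} {f g : ℝ → ℂ} (hab : a < b)
    (hf : MemLp f 2 (volume.restrict (Ioc a b))) (hg : MemLp g 2 (volume.restrict (Ioc a b))) :
    HasSum (fun i => conj (fourierCoeffOn hab f i) * fourierCoeffOn hab g i)
      ((b - a)⁻¹ • ∫ x in a..b, conj (f x) * g x) := by
  have := Fact.mk (by linarith : 0 < b - a)
  rw [← add_sub_cancel a b] at hf hg
  have hF := hf.memLp_liftIoc.haarAddCircle
  have hG := hg.memLp_liftIoc.haarAddCircle
  have h := fourierBasis.hasSum_inner_mul_inner hF.toLp hG.toLp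
  have hcoeff : ∀ i, inner ℂ (hF.toLp) (fourierBasis i) * inner ℂ (fourierBasis i) hG.toLp =
      conj (fourierCoeffOn hab f i) * fourierCoeffOn hab g i := by
    intro i
    rw [← inner_conj_symm, ← fourierBasis.repr_apply_apply, ← fourierBasis.repr_apply_apply,
      fourierBasis_repr, fourierBasis_repr]
    simp [fourierCoeff_congr_ae hF.coeFn_toLp, fourierCoeff_congr_ae hG.coeFn_toLp,
      fourierCoeff_liftIoc_eq]
  have hinner : inner ℂ (hF.toLp) hG.toLp = (b - a)⁻¹ • ∫ x in a..b, conj (f x) * g x :=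
    calc inner ℂ (hF.toLp) hG.toLp
        = ∫ t, AddCircle.liftIoc (b - a) a (fun x => conj (f x) * g x) t
            ∂AddCircle.haarAddCircle := by
          rw [L2.inner_def]
          refine integral_congr_ae ?_
          filter_upwards [hF.coeFn_toLp, hG.coeFn_toLp] with t hFt hGt
          rw [hFt, hGt, RCLike.inner_apply, mul_comm]
          rfl
      _ = (b - a)⁻¹ • ∫ x in a..b, conj (f x) * g x := by
          rw [AddCircle.integral_haarAddCircle, AddCircle.integral_liftIoc_eq_intervalIntegral,
            add_sub_cancel]
  simpa only [hcoeff, hinner] using h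

theorem fourierCoeffOn_conj {a b : ℝ} (hab : a < b) (f : ℝ → ℂ) (n : ℤ) :
    fourierCoeffOn hab (fun x => conj (f x)) n = conj (fourierCoeffOn hab f (-n)) := by
  simp only [fourierCoeffOn_eq_integral, real_smul, map_mul, conj_ofReal, smul_eq_mul,
    ← intervalIntegral.intervalIntegral_conj, neg_neg, ← fourier_neg]

theorem fourierCoeffOn_deriv_of_eq {a b : ℝ} (hab : a < b) {f f' : ℝ → ℂ}
    (hf : ∀ x ∈ [[a, b]], HasDerivAt f (f' x) x) (hf' : IntervalIntegrable f' volume a b)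
    (hfab : f b = f a) (n : ℤ) :
    fourierCoeffOn hab f' n = 2 * π * I * n / (b - a) * fourierCoeffOn hab f n := by
  rcases eq_or_ne n 0 with rfl | hn
  · simp [fourierCoeffOn_eq_integral, intervalIntegral.integral_eq_sub_of_hasDerivAt hf hf', hfab]
  · have hba : (b : ℂ) - a ≠ 0 := by exact_mod_cast (sub_pos.mpr hab).ne'
    have hn' : (n : ℂ) ≠ 0 := Int.cast_ne_zero.mpr hn
    rw [fourierCoeffOn_of_hasDerivAt hab hn hf hf', hfab]
    field_simp
    ring

theorem norm_tsum_neg_mul_le {c : ℤ → ℂ} (hc : Summable fun n => ‖c n‖ ^ 2) :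
    ‖∑' n, c (-n) * c n‖ ≤ ∑' n, ‖c n‖ ^ 2 := by
  have hc' : Summable fun n => ‖c (-n)‖ ^ 2 := hc.comp_injective neg_injective
  have hamgm : ∀ n, ‖c (-n) * c n‖ ≤ (‖c (-n)‖ ^ 2 + ‖c n‖ ^ 2) / 2 := fun n => by
    rw [norm_mul]; nlinarith [sq_nonneg (‖c (-n)‖ - ‖c n‖)]
  calc ‖∑' n, c (-n) * c n‖
      ≤ ∑' n, (‖c (-n)‖ ^ 2 + ‖c n‖ ^ 2) / 2 :=
        tsum_of_norm_bounded ((hc'.add hc).div_const 2).hasSum hamgm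
    _ = ∑' n, ‖c n‖ ^ 2 := by
        rw [tsum_div_const, hc'.tsum_add hc, tsum_comp_neg (fun n => ‖c n‖ ^ 2)]
        ring

theorem le_two_mul_of_hasSum_neg_mul_eq_zero {c : ℤ → ℂ} {A B : ℝ}
    (hA : HasSum (fun n => ‖c n‖ ^ 2) A) (hB : HasSum (fun n : ℤ => (n : ℝ) ^ 2 * ‖c n‖ ^ 2) B)
    (hc : HasSum (fun n => c (-n) * c n) 0) : A ≤ 2 * B := by
  set d := Function.update c 0 0
  have hd : HasSum (fun n => ‖d n‖ ^ 2) (A - ‖c 0‖ ^ 2) := by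
    have h : (fun n => ‖d n‖ ^ 2) = Function.update (fun n => ‖c n‖ ^ 2) 0 0 := by
      ext n; by_cases hn : n = 0 <;> simp [d, hn]
    rw [h, show A - ‖c 0‖ ^ 2 = (0 - ‖c 0‖ ^ 2) + A by ring]
    exact hA.update 0 0
  have hdd : HasSum (fun n => d (-n) * d n) (-c 0 ^ 2) := by
    have h : (fun n => d (-n) * d n) = Function.update (fun n => c (-n) * c n) 0 0 := by
      ext n; by_cases hn : n = 0 <;> simp [d, hn]
    rw [h, show -c 0 ^ 2 = (0 - c (-0) * c 0) + 0 by rw [neg_zero]; ring]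
    exact hc.update 0 0
  have hc0 : ‖c 0‖ ^ 2 ≤ A - ‖c 0‖ ^ 2 := by
    simpa [hdd.tsum_eq, hd.tsum_eq] using norm_tsum_neg_mul_le hd.summable
  have hdB : A - ‖c 0‖ ^ 2 ≤ B := by
    refine hasSum_le (fun n => ?_) hd hB
    by_cases hn : n = 0
    · simp [d, hn]
    · have : (1 : ℝ) ≤ (n : ℝ) ^ 2 := by
        rw [one_le_sq_iff_one_le_abs, ← Int.cast_abs]; exact_mod_cast Int.one_le_abs hn
      simpa [d, hn] using le_mul_of_one_le_left (sq_nonneg _) this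
  linarith

theorem integral_norm_sq_le_of_integral_sq_eq_zero {a b : ℝ} (hab : a < b) {u u' : ℝ → ℂ}
    (hu : ∀ x ∈ [[a, b]], HasDerivAt u (u' x) x) (hu' : ContinuousOn u' [[a, b]])
    (hper : u b = u a) (h0 : ∫ x in a..b, u x ^ 2 = 0) :
    ∫ x in a..b, ‖u x‖ ^ 2 ≤ 2 * ((b - a) / (2 * π)) ^ 2 * ∫ x in a..b, ‖u' x‖ ^ 2 := by
  set c := fourierCoeffOn hab u
  have hba : 0 < b - a := sub_pos.mpr hab
  have hL2 {f : ℝ → ℂ} (hf : ContinuousOn f [[a, b]]) : MemLp f 2 (volume.restrict (Ioc a b)) :=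
    (uIcc_of_le hab.le ▸ hf).memLp_restrict_Ioc 2
  have huc : ContinuousOn u [[a, b]] := fun x hx => (hu x hx).continuousAt.continuousWithinAt
  have hA := hasSum_sq_fourierCoeffOn hab (hL2 huc)
  have hB : HasSum (fun n : ℤ => (n : ℝ) ^ 2 * ‖c n‖ ^ 2)
      (((b - a) / (2 * π)) ^ 2 * ((b - a)⁻¹ • ∫ x in a..b, ‖u' x‖ ^ 2)) := by
    refine ((hasSum_sq_fourierCoeffOn hab (hL2 hu')).mul_left
      (((b - a) / (2 * π)) ^ 2)).congr_fun fun n => ?_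
    rw [fourierCoeffOn_deriv_of_eq hab hu hu'.intervalIntegrable hper, ← ofReal_sub]
    simp only [norm_mul, norm_div, norm_I, Complex.norm_ofNat, norm_real, norm_intCast,
      Real.norm_eq_abs, abs_of_pos pi_pos, abs_of_pos hba, mul_one, c]
    field_simp
    rw [sq_abs, mul_comm]
  have hC : HasSum (fun n => c (-n) * c n) 0 := by
    have h := hasSum_conj_fourierCoeffOn_mul (f := fun x => conj (u x)) hab
      (hL2 (continuous_conj.comp_continuousOn huc)) (hL2 huc)
    simp only [fourierCoeffOn_conj, conj_conj, ← sq] at h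
    rwa [h0, smul_zero] at h
  have key := le_two_mul_of_hasSum_neg_mul_eq_zero hA hB hC
  rw [smul_eq_mul, smul_eq_mul] at key
  refine le_of_mul_le_mul_left ?_ (inv_pos.mpr hba)
  calc _ ≤ _ := key
    _ = _ := by ring

theorem circleAverage_eq_of_differentiableOn_closedBall_diff_ball {E : Type*}
    [NormedAddCommGroup E] [NormedSpace ℂ E] {f : ℂ → E} {c : ℂ} {r R : ℝ} (h0 : 0 < r)
    (hle : r ≤ R) (hf : DifferentiableOn ℂ f (closedBall c R \ ball c r)) :
    circleAverage f c R = circleAverage f c r := by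
  have hopen : IsOpen (ball c R \ closedBall c r) := isOpen_ball.sdiff isClosed_closedBall
  have hsub : ball c R \ closedBall c r ⊆ closedBall c R \ ball c r :=
    sdiff_subset_sdiff ball_subset_closedBall ball_subset_closedBall
  rw [circleAverage_eq_circleIntegral (h0.trans_le hle).ne', circleAverage_eq_circleIntegral h0.ne',
    circleIntegral_sub_center_inv_smul_eq_of_differentiable_on_annulus_off_countable h0 hle
      countable_empty hf.continuousOn fun z hz =>
        hf.differentiableAt (Filter.mem_of_superset (hopen.mem_nhds hz.1) hsub)]

theorem circleAverage_eq_of_differentiableOn_annulus_s11 {E : Type*} [NormedAddCommGroup E]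
    [NormedSpace ℂ E] {f : ℂ → E} {R₀ R₁ : ℝ} (hR₀ : 0 ≤ R₀)
    (hf : DifferentiableOn ℂ f {z : ℂ | R₀ < ‖z‖ ∧ ‖z‖ < R₁}) {r s : ℝ}
    (hr₀ : R₀ < r) (hr₁ : r < R₁) (hs₀ : R₀ < s) (hs₁ : s < R₁) :
    circleAverage f 0 r = circleAverage f 0 s := by
  wlog hrs : r ≤ s generalizing r s
  · exact (this hs₀ hs₁ hr₀ hr₁ (le_of_not_ge hrs)).symm
  refine (circleAverage_eq_of_differentiableOn_closedBall_diff_ball (hR₀.trans_lt hr₀) hrs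
    (hf.mono fun z hz => ?_)).symm
  simp only [mem_sdiff, mem_closedBall_zero_iff, mem_ball_zero_iff, not_lt] at hz
  exact ⟨hr₀.trans_le hz.2, hz.1.trans_lt hs₁⟩

theorem integral_norm_sq_comp_circleMap_le {f : ℂ → ℂ} {U : Set ℂ} (hU : IsOpen U)
    (hf : DifferentiableOn ℂ f U) {c : ℂ} {R : ℝ} (hR : sphere c |R| ⊆ U)
    (h0 : ∫ θ in 0..2 * π, f (circleMap c R θ) ^ 2 = 0) :
    ∫ θ in 0..2 * π, ‖f (circleMap c R θ)‖ ^ 2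
      ≤ 2 * R ^ 2 * ∫ θ in 0..2 * π, ‖deriv f (circleMap c R θ)‖ ^ 2 := by
  have hmem (θ : ℝ) : circleMap c R θ ∈ U := hR (circleMap_mem_sphere' c R θ)
  have hderiv (θ : ℝ) : HasDerivAt (fun θ => f (circleMap c R θ))
      (deriv f (circleMap c R θ) * (circleMap 0 R θ * I)) θ :=
    (hf.differentiableAt (hU.mem_nhds (hmem θ))).hasDerivAt.comp θ (hasDerivAt_circleMap c R θ)
  have hcont : Continuous fun θ => deriv f (circleMap c R θ) * (circleMap 0 R θ * I) :=
    ((hf.deriv hU).continuousOn.comp_continuous (continuous_circleMap c R) hmem).mul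
      ((continuous_circleMap 0 R).mul continuous_const)
  have h := integral_norm_sq_le_of_integral_sq_eq_zero two_pi_pos (fun θ _ => hderiv θ)
    hcont.continuousOn (by simpa using congrArg f (periodic_circleMap c R 0)) h0
  simp only [norm_mul, norm_circleMap_zero, norm_I, mul_one, mul_pow, sq_abs, sub_zero,
    div_self two_pi_pos.ne', one_pow, intervalIntegral.integral_mul_const] at h
  linarith

theorem stmt_11_general (R₀ R₁ : ℝ) (hR₀ : 0 ≤ R₀) (G : ℂ → ℂ)
    (hG : DifferentiableOn ℂ G
      {z : ℂ | R₀ < ‖z‖ ∧ ‖z‖ < R₁})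
    (r : ℝ) (hr₀ : R₀ < r) (hr₁ : r < R₁)
    (hint : ∫ θ in (0:ℝ)..(2 * π),
        (G ((r : ℂ) * Complex.exp (θ * Complex.I))) ^ 2 = 0) :
    ∀ ρ : ℝ, R₀ < ρ → ρ < R₁ →
      2 * ρ ^ 2 * ∫ θ in (0:ℝ)..(2 * π),
          ‖deriv G ((ρ : ℂ) * Complex.exp (θ * Complex.I))‖ ^ 2
        ≥ ∫ θ in (0:ℝ)..(2 * π),
            ‖G ((ρ : ℂ) * Complex.exp (θ * Complex.I))‖ ^ 2 := by
  intro ρ hρ₀ hρ₁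
  have hU : IsOpen {z : ℂ | R₀ < ‖z‖ ∧ ‖z‖ < R₁} :=
    (isOpen_lt continuous_const continuous_norm).inter (isOpen_lt continuous_norm continuous_const)
  have hsphere : sphere 0 |ρ| ⊆ {z : ℂ | R₀ < ‖z‖ ∧ ‖z‖ < R₁} := fun z hz => by
    rw [mem_sphere_zero_iff_norm, abs_of_pos (hR₀.trans_lt hρ₀)] at hz
    exact ⟨hz ▸ hρ₀, hz ▸ hρ₁⟩
  have hzero : ∫ θ in 0..2 * π, G (circleMap 0 ρ θ) ^ 2 = 0 := by
    have h := circleAverage_eq_of_differentiableOn_annulus_s11 hR₀ (hG.pow 2) hρ₀ hρ₁ hr₀ hr₁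
    simpa [circleAverage_def, circleMap_zero, hint, two_pi_pos.ne'] using h
  simpa only [circleMap_zero, ge_iff_le] using
    integral_norm_sq_comp_circleMap_le hU hG hsphere hzero

/-- If the circle integral of `G²` vanishes on some circle in the annulus, then
on every circle `2ρ² ∫₀^{2π} ‖G′‖² dθ ≥ ∫₀^{2π} ‖G‖² dθ`. -/
theorem stmt_11 (R₀ R₁ : ℝ) (hR₀ : 0 ≤ R₀) (hR : R₀ < R₁) (G : ℂ → ℂ)
    (hG : DifferentiableOn ℂ G
      {z : ℂ | R₀ < ‖z‖ ∧ ‖z‖ < R₁})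
    (r : ℝ) (hr₀ : R₀ < r) (hr₁ : r < R₁)
    (hint : ∫ θ in (0:ℝ)..(2 * π),
        (G ((r : ℂ) * Complex.exp (θ * Complex.I))) ^ 2 = 0) :
    ∀ ρ : ℝ, R₀ < ρ → ρ < R₁ →
      2 * ρ ^ 2 * ∫ θ in (0:ℝ)..(2 * π),
          ‖deriv G ((ρ : ℂ) * Complex.exp (θ * Complex.I))‖ ^ 2
        ≥ ∫ θ in (0:ℝ)..(2 * π),
            ‖G ((ρ : ℂ) * Complex.exp (θ * Complex.I))‖ ^ 2 :=
  stmt_11_general R₀ R₁ hR₀ G hG r hr₀ hr₁ hint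
end

section
/- Let 0 ≤ R₀ < R₁ and let a : ℤ → ℂ be a family of coefficients such that for every r with R₀ < r < R₁ the family (n ↦ ‖a(n)‖²·r^{2n}) is summable over ℤ. If the function r ↦ ∑_{n∈ℤ} ‖a(n)‖²·r^{2n} is constant on the interval (R₀, R₁), then a(n) = 0 for every integer n ≠ 0. -/
open Real

private lemma zpow_ne_zpow {u v : ℝ} (hu : 0 < u) (huv : u < v) {n : ℤ} (hn : n ≠ 0) :
    u ^ n ≠ v ^ n := by
  intro h
  have h1 : (1 : ℝ) < v / u := (one_lt_div hu).mpr huv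
  have h2 : (v / u) ^ n = (v / u) ^ (0 : ℤ) := by
    rw [div_zpow, ← h, zpow_zero, div_self (zpow_ne_zero n hu.ne')]
  exact hn ((zpow_right_strictMono₀ h1).injective h2)

private lemma zpow_two_mul' {u : ℝ} (hu : u ≠ 0) (n : ℤ) : u ^ (2 * n) = (u ^ n) ^ 2 := by
  rw [two_mul, zpow_add₀ hu, sq]

/-- Liouville-type step: if `r ↦ ∑_{n∈ℤ} ‖a n‖² r^{2n}` is constant on a
nondegenerate interval of radii, then `a n = 0` for all `n ≠ 0`. -/
theorem stmt_13 (R₀ R₁ : ℝ) (hR₀ : 0 ≤ R₀) (hR : R₀ < R₁) (a : ℤ → ℂ)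
    (ha : ∀ r : ℝ, R₀ < r → r < R₁ →
      Summable (fun n : ℤ => ‖a n‖ ^ 2 * r ^ (2 * n)))
    (hconst : ∀ r s : ℝ, R₀ < r → r < R₁ → R₀ < s → s < R₁ →
      (∑' n : ℤ, ‖a n‖ ^ 2 * r ^ (2 * n))
        = ∑' n : ℤ, ‖a n‖ ^ 2 * s ^ (2 * n)) :
    ∀ n : ℤ, n ≠ 0 → a n = 0 := by
  intro m hm
  by_contra hma
  set u : ℝ := (3 * R₀ + R₁) / 4 with hu_def
  set v : ℝ := (R₀ + 3 * R₁) / 4 with hv_def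
  have hu0 : 0 < u := by simp only [hu_def]; linarith
  have huv : u < v := by simp only [hu_def, hv_def]; linarith
  have hv0 : 0 < v := hu0.trans huv
  have hRu : R₀ < u := by simp only [hu_def]; linarith
  have hvR : v < R₁ := by simp only [hv_def]; linarith
  set w : ℝ := Real.sqrt (u * v) with hw_def
  have huw : u < w := by
    rw [hw_def]
    exact (Real.lt_sqrt hu0.le).mpr (by nlinarith)
  have hwv : w < v := by
    rw [hw_def]
    exact (Real.sqrt_lt' hv0).mpr (by nlinarith)
  have hRw : R₀ < w := hRu.trans huw
  have hwR : w < R₁ := hwv.trans hvR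
  have hw2 : w ^ 2 = u * v := Real.sq_sqrt (by positivity)
  have hwpow : ∀ n : ℤ, w ^ (2 * n) = u ^ n * v ^ n := by
    intro n
    have hw0 : (0:ℝ) < w := hu0.trans huw
    rw [zpow_two_mul' hw0.ne']
    rw [show ((w ^ n) ^ 2 : ℝ) = (w ^ 2) ^ n from by rw [sq, sq, mul_zpow]]
    rw [hw2, mul_zpow]
  have key_le : ∀ n : ℤ,
      ‖a n‖ ^ 2 * w ^ (2 * n)
        ≤ (‖a n‖ ^ 2 * u ^ (2 * n) + ‖a n‖ ^ 2 * v ^ (2 * n)) / 2 := by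
    intro n
    rw [hwpow, zpow_two_mul' hu0.ne', zpow_two_mul' hv0.ne']
    nlinarith [sq_nonneg (u ^ n - v ^ n), sq_nonneg (‖a n‖ * (u ^ n - v ^ n)),
      sq_nonneg (‖a n‖), mul_nonneg (sq_nonneg ‖a n‖) (sq_nonneg (u ^ n - v ^ n))]
  have key_lt : ‖a m‖ ^ 2 * w ^ (2 * m)
      < (‖a m‖ ^ 2 * u ^ (2 * m) + ‖a m‖ ^ 2 * v ^ (2 * m)) / 2 := by
    rw [hwpow, zpow_two_mul' hu0.ne', zpow_two_mul' hv0.ne']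
    have hne : u ^ m ≠ v ^ m := zpow_ne_zpow hu0 huv hm
    have hd : 0 < (u ^ m - v ^ m) ^ 2 :=
      lt_of_le_of_ne (sq_nonneg _) (Ne.symm (pow_ne_zero 2 (sub_ne_zero.mpr hne)))
    have hna : 0 < ‖a m‖ ^ 2 := by
      have : ‖a m‖ ≠ 0 := norm_ne_zero_iff.mpr hma
      positivity
    nlinarith [mul_pos hna hd]
  have hsu := ha u hRu (huv.trans hvR)
  have hsv := ha v (hRu.trans huv) hvR
  have hsw := ha w hRw hwR
  have hsg : Summable (fun n : ℤ =>
      (‖a n‖ ^ 2 * u ^ (2 * n) + ‖a n‖ ^ 2 * v ^ (2 * n)) / 2) :=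
    (hsu.add hsv).div_const 2
  have hlt : (∑' n : ℤ, ‖a n‖ ^ 2 * w ^ (2 * n))
      < ∑' n : ℤ, (‖a n‖ ^ 2 * u ^ (2 * n) + ‖a n‖ ^ 2 * v ^ (2 * n)) / 2 :=
    Summable.tsum_lt_tsum key_le key_lt hsw hsg
  have heq : (∑' n : ℤ, (‖a n‖ ^ 2 * u ^ (2 * n) + ‖a n‖ ^ 2 * v ^ (2 * n)) / 2)
      = ((∑' n : ℤ, ‖a n‖ ^ 2 * u ^ (2 * n)) + ∑' n : ℤ, ‖a n‖ ^ 2 * v ^ (2 * n)) / 2 := by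
    rw [tsum_div_const, Summable.tsum_add hsu hsv]
  rw [heq, ← hconst u w hRu (huv.trans hvR) hRw hwR,
    ← hconst u v hRu (huv.trans hvR) (hRu.trans huv) hvR] at hlt
  linarith
end

section
/- Let k ≥ 0 be a real number, let A > 0, and let w : ℝ → ℝ be twice continuously differentiable on [0, A]. Suppose w(0) ≥ 0, w′(0) ≥ 0, and w″(t) > k·w(t) for every t ∈ [0, A]. Then w(t) > 0 for every t ∈ (0, A]. -/
open Set Filter Topology

section SecondDerivative

variable {f : ℝ → ℝ} {a b x y : ℝ}

lemma strictMonoOn_Icc_of_derivWithin_pos (hf : ContinuousOn f (Icc a b))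
    (hxy : Icc x y ⊆ Icc a b) (hpos : ∀ u ∈ Ioo x y, 0 < derivWithin f (Icc a b) u) :
    StrictMonoOn f (Icc x y) := by
  refine strictMonoOn_of_deriv_pos (convex_Icc x y) (hf.mono hxy) fun u hu => ?_
  rw [interior_Icc] at hu
  rw [← derivWithin_of_mem_nhds (mem_of_superset (Icc_mem_nhds hu.1 hu.2) hxy)]
  exact hpos u hu

lemma strictMonoOn_Icc_of_derivWithin_nonneg_of_strictMonoOn (hf : ContinuousOn f (Icc a b))
    (hxy : Icc x y ⊆ Icc a b) (hx : 0 ≤ derivWithin f (Icc a b) x)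
    (hmono : StrictMonoOn (derivWithin f (Icc a b)) (Icc x y)) :
    StrictMonoOn f (Icc x y) :=
  strictMonoOn_Icc_of_derivWithin_pos hf hxy fun _ hu =>
    hx.trans_lt (hmono (left_mem_Icc.2 (hu.1.trans hu.2).le) (Ioo_subset_Icc_self hu) hu.1)

/-- Continuous induction on the closed set where `f` and `f'` are both nonnegative: at such a
point `f'' > 0`, hence `f'' > 0` on a right neighbourhood, where first `f'` and then `f` increase. -/
lemma Icc_subset_nonneg_of_second_derivWithin_pos (hf : ContDiffOn ℝ 2 f (Icc a b))
    (hab : a < b) (ha : 0 ≤ f a) (ha' : 0 ≤ derivWithin f (Icc a b) a)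
    (h2 : ∀ t ∈ Icc a b, 0 ≤ f t → 0 < derivWithin (derivWithin f (Icc a b)) (Icc a b) t) :
    Icc a b ⊆ {t | 0 ≤ f t ∧ 0 ≤ derivWithin f (Icc a b) t} := by
  have hu := uniqueDiffOn_Icc hab
  have hf0 : ContinuousOn f (Icc a b) := hf.continuousOn
  have hf1 : ContinuousOn (derivWithin f (Icc a b)) (Icc a b) :=
    hf.continuousOn_derivWithin hu (by norm_num)
  have hf2 : ContinuousOn (derivWithin (derivWithin f (Icc a b)) (Icc a b)) (Icc a b) :=
    (hf.derivWithin hu (m := 1) (by norm_num)).continuousOn_derivWithin hu le_rfl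
  refine IsClosed.Icc_subset_of_forall_mem_nhdsWithin ?_ ⟨ha, ha'⟩ ?_
  · rw [inter_comm]
    exact (hf0.prodMk hf1).preimage_isClosed_of_isClosed isClosed_Icc
      (isClosed_Ici.prod isClosed_Ici)
  rintro x ⟨⟨hfx, hfx'⟩, hax, hxb⟩
  have hx : x ∈ Icc a b := ⟨hax, hxb.le⟩
  obtain ⟨y, hxy, hpos⟩ : ∃ y ∈ Ioi x,
      Ico x y ⊆ {u | 0 < derivWithin (derivWithin f (Icc a b)) (Icc a b) u} := by
    rw [← mem_nhdsGE_iff_exists_Ico_subset, ← nhdsWithin_Icc_eq_nhdsGE hxb]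
    exact nhdsWithin_mono _ (Icc_subset_Icc_left hax)
      ((hf2 x hx).eventually (lt_mem_nhds (h2 x hx hfx)))
  have hxz : x < min y b := lt_min hxy hxb
  have hsub : Icc x (min y b) ⊆ Icc a b := Icc_subset_Icc hax (min_le_right _ _)
  have hmono' := strictMonoOn_Icc_of_derivWithin_pos hf1 hsub fun u hu =>
    hpos ⟨hu.1.le, hu.2.trans_le (min_le_left _ _)⟩
  have hmono := strictMonoOn_Icc_of_derivWithin_nonneg_of_strictMonoOn hf0 hsub hfx' hmono'
  have hxmem : x ∈ Icc x (min y b) := left_mem_Icc.2 hxz.le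
  rw [mem_nhdsGT_iff_exists_Ioo_subset]
  exact ⟨min y b, hxz, fun u hu =>
    ⟨hfx.trans (hmono hxmem (Ioo_subset_Icc_self hu) hu.1).le,
      hfx'.trans (hmono' hxmem (Ioo_subset_Icc_self hu) hu.1).le⟩⟩

lemma strictMonoOn_Icc_of_second_derivWithin_pos (hf : ContDiffOn ℝ 2 f (Icc a b))
    (hab : a < b) (ha : 0 ≤ f a) (ha' : 0 ≤ derivWithin f (Icc a b) a)
    (h2 : ∀ t ∈ Icc a b, 0 ≤ f t → 0 < derivWithin (derivWithin f (Icc a b)) (Icc a b) t) :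
    StrictMonoOn f (Icc a b) := by
  have hnonneg := Icc_subset_nonneg_of_second_derivWithin_pos hf hab ha ha' h2
  have hmono' : StrictMonoOn (derivWithin f (Icc a b)) (Icc a b) :=
    strictMonoOn_Icc_of_derivWithin_pos
      (hf.continuousOn_derivWithin (uniqueDiffOn_Icc hab) (by norm_num)) subset_rfl
      fun u hu => h2 u (Ioo_subset_Icc_self hu) (hnonneg (Ioo_subset_Icc_self hu)).1
  exact strictMonoOn_Icc_of_derivWithin_nonneg_of_strictMonoOn hf.continuousOn subset_rfl
    ha' hmono'

end SecondDerivative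

/-- ODE comparison: if `w` is `C²` on `[0,A]` with `w(0) ≥ 0`, `w′(0) ≥ 0` and
`w″(t) > k·w(t)` on `[0,A]` (for `k ≥ 0`), then `w > 0` on `(0,A]`. -/
theorem stmt_14 (k A : ℝ) (hk : 0 ≤ k) (hA : 0 < A) (w : ℝ → ℝ)
    (hw : ContDiffOn ℝ 2 w (Icc 0 A))
    (hw0 : 0 ≤ w 0)
    (hw0' : 0 ≤ derivWithin w (Icc 0 A) 0)
    (hw'' : ∀ t ∈ Icc 0 A,
      k * w t < derivWithin (derivWithin w (Icc 0 A)) (Icc 0 A) t) :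
    ∀ t ∈ Ioc 0 A, 0 < w t := by
  have hmono : StrictMonoOn w (Icc 0 A) :=
    strictMonoOn_Icc_of_second_derivWithin_pos hw hA hw0 hw0' fun t ht hwt =>
      (mul_nonneg hk hwt).trans_lt (hw'' t ht)
  intro t ht
  exact hw0.trans_lt (hmono (left_mem_Icc.2 hA.le) (Ioc_subset_Icc_self ht) ht.1)
end

section
/- Let c > 0 and A > 0, and let f, g : ℝ → ℝ be twice continuously differentiable on [−A, A]. Suppose that for every h ∈ [−A, A] one has f″(h) < c²·f(h) and g″(h) = c²·g(h), and that f(0) = g(0), f′(0) = 0, and g′(0) = 0. Then f(h) < g(h) for every h ∈ [−A, A] with h ≠ 0. -/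
/-!
Put `w = g - f`, so that `w'' > c²w` and `w(0) = w'(0) = 0`. Writing the operator as
`(D + c)(D - c)`, the function `u = w' - cw` satisfies `u' + cu > 0` and `u(0) = 0`, hence
`e^{ct}u` increases and `u > 0` for `t > 0`; then `e^{-ct}w` increases, so `w > 0` for `t > 0`.
The case `t < 0` follows by applying this to `t ↦ w(-t)`.
-/

open Set

section Comparison

variable {a b k c : ℝ}

theorem pos_of_mul_lt_deriv {v v' : ℝ → ℝ} (hv : ContinuousOn v (Icc a b))
    (hdv : ∀ x ∈ Ioo a b, HasDerivAt v (v' x) x) (hlt : ∀ x ∈ Ioo a b, k * v x < v' x)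
    (ha : 0 ≤ v a) : ∀ x ∈ Ioc a b, 0 < v x := by
  have hderiv : ∀ x ∈ Ioo a b, HasDerivAt (fun t => Real.exp (-(k * t)) * v t)
      (Real.exp (-(k * x)) * (v' x - k * v x)) x := by
    intro x hx
    have he : HasDerivAt (fun t => Real.exp (-(k * t))) (Real.exp (-(k * x)) * -k) x := by
      simpa using ((hasDerivAt_id x).const_mul k).fun_neg.exp
    exact (he.fun_mul (hdv x hx)).congr_deriv (by ring)
  have hmono : StrictMonoOn (fun t => Real.exp (-(k * t)) * v t) (Icc a b) := by
    refine strictMonoOn_of_deriv_pos (convex_Icc a b)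
      ((Real.continuous_exp.comp (continuous_const.mul continuous_id).neg).continuousOn.mul hv)
      fun x hx => ?_
    rw [interior_Icc] at hx
    rw [(hderiv x hx).deriv]
    exact mul_pos (Real.exp_pos _) (sub_pos.mpr (hlt x hx))
  intro x hx
  have hax := hmono (left_mem_Icc.mpr (hx.1.le.trans hx.2)) (Ioc_subset_Icc_self hx) hx.1
  exact pos_of_mul_pos_right ((mul_nonneg (Real.exp_pos _).le ha).trans_lt hax) (Real.exp_pos _).le

theorem pos_of_sq_mul_lt_deriv_deriv {w w' w'' : ℝ → ℝ} (hw : ContinuousOn w (Icc a b))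
    (hw' : ContinuousOn w' (Icc a b)) (hdw : ∀ x ∈ Ioo a b, HasDerivAt w (w' x) x)
    (hdw' : ∀ x ∈ Ioo a b, HasDerivAt w' (w'' x) x)
    (hlt : ∀ x ∈ Ioo a b, c ^ 2 * w x < w'' x)
    (ha : w a = 0) (ha' : w' a = 0) : ∀ x ∈ Ioc a b, 0 < w x := by
  have hu : ∀ x ∈ Ioc a b, 0 < w' x - c * w x :=
    pos_of_mul_lt_deriv (k := -c) (hw'.sub (continuousOn_const.mul hw))
      (fun x hx => (hdw' x hx).sub ((hdw x hx).const_mul c))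
      (fun x hx => by nlinarith [hlt x hx]) (by simp [ha, ha'])
  exact pos_of_mul_lt_deriv (k := c) hw hdw
    (fun x hx => by linarith [hu x (Ioo_subset_Ioc_self hx)]) ha.ge

theorem pos_of_sq_mul_lt_deriv_deriv_of_ne_zero {w w' w'' : ℝ → ℝ}
    (ha : a ≤ 0) (hb : 0 ≤ b) (hw : ContinuousOn w (Icc a b)) (hw' : ContinuousOn w' (Icc a b))
    (hdw : ∀ x ∈ Ioo a b, HasDerivAt w (w' x) x)
    (hdw' : ∀ x ∈ Ioo a b, HasDerivAt w' (w'' x) x)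
    (hlt : ∀ x ∈ Ioo a b, c ^ 2 * w x < w'' x) (h0 : w 0 = 0) (h0' : w' 0 = 0) :
    ∀ x ∈ Icc a b, x ≠ 0 → 0 < w x := by
  intro x hx hx0
  rcases hx0.lt_or_gt with hneg | hpos
  · have hIcc : MapsTo Neg.neg (Icc 0 (-a)) (Icc a b) := fun t ht =>
      ⟨by linarith [ht.2], by linarith [ht.1]⟩
    have hIoo : MapsTo Neg.neg (Ioo 0 (-a)) (Ioo a b) := fun t ht =>
      ⟨by linarith [ht.2], by linarith [ht.1]⟩
    have hrefl := pos_of_sq_mul_lt_deriv_deriv (c := c) (w := fun t => w (-t))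
      (w' := fun t => -w' (-t)) (w'' := fun t => w'' (-t)) (hw.comp continuousOn_neg hIcc)
      (hw'.comp continuousOn_neg hIcc).neg
      (fun t ht => by
        simpa [Function.comp_def] using (hdw _ (hIoo ht)).scomp t (hasDerivAt_neg' t))
      (fun t ht => by
        have h : HasDerivAt (fun t => w' (-t)) (-w'' (-t)) t := by
          simpa [Function.comp_def] using (hdw' _ (hIoo ht)).scomp t (hasDerivAt_neg' t)
        simpa using h.fun_neg)
      (fun t ht => hlt _ (hIoo ht)) (by simpa using h0) (by simpa using h0') (-x)
      ⟨by linarith, by linarith [hx.1]⟩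
    simpa using hrefl
  · exact pos_of_sq_mul_lt_deriv_deriv (hw.mono (Icc_subset_Icc_left ha))
      (hw'.mono (Icc_subset_Icc_left ha)) (fun t ht => hdw t (Ioo_subset_Ioo_left ha ht))
      (fun t ht => hdw' t (Ioo_subset_Ioo_left ha ht))
      (fun t ht => hlt t (Ioo_subset_Ioo_left ha ht)) h0 h0' x ⟨hpos, hx.2⟩

theorem hasDerivAt_derivWithin_Icc {u : ℝ → ℝ} (hu : DifferentiableOn ℝ u (Icc a b))
    {x : ℝ} (hx : x ∈ Ioo a b) : HasDerivAt u (derivWithin u (Icc a b) x) x :=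
  (hu x (Ioo_subset_Icc_self hx)).hasDerivWithinAt.hasDerivAt (Icc_mem_nhds hx.1 hx.2)

end Comparison

theorem stmt_15_general (c A : ℝ) (f g : ℝ → ℝ)
    (hf : ContDiffOn ℝ 2 f (Icc (-A) A))
    (hg : ContDiffOn ℝ 2 g (Icc (-A) A))
    (hf'' : ∀ h ∈ Icc (-A) A,
      derivWithin (derivWithin f (Icc (-A) A)) (Icc (-A) A) h < c ^ 2 * f h)
    (hg'' : ∀ h ∈ Icc (-A) A,
      derivWithin (derivWithin g (Icc (-A) A)) (Icc (-A) A) h = c ^ 2 * g h)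
    (h0 : f 0 = g 0)
    (hf0' : derivWithin f (Icc (-A) A) 0 = 0)
    (hg0' : derivWithin g (Icc (-A) A) 0 = 0) :
    ∀ h ∈ Icc (-A) A, h ≠ 0 → f h < g h := by
  intro h hh hne
  set I := Icc (-A) A
  have hA : -A < A := by rcases hne.lt_or_gt with h' | h' <;> linarith [hh.1, hh.2]
  have hf1 : ContDiffOn ℝ 1 (derivWithin f I) I := hf.derivWithin (uniqueDiffOn_Icc hA) le_rfl
  have hg1 : ContDiffOn ℝ 1 (derivWithin g I) I := hg.derivWithin (uniqueDiffOn_Icc hA) le_rfl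
  refine sub_pos.mp (pos_of_sq_mul_lt_deriv_deriv_of_ne_zero (c := c)
    (w := fun t => g t - f t) (w' := fun t => derivWithin g I t - derivWithin f I t)
    (w'' := fun t => derivWithin (derivWithin g I) I t -
      derivWithin (derivWithin f I) I t)
    (by linarith) (by linarith) (hg.continuousOn.sub hf.continuousOn)
    (hg1.continuousOn.sub hf1.continuousOn)
    (fun x hx => (hasDerivAt_derivWithin_Icc (hg.differentiableOn two_ne_zero) hx).sub
      (hasDerivAt_derivWithin_Icc (hf.differentiableOn two_ne_zero) hx))
    (fun x hx => (hasDerivAt_derivWithin_Icc (hg1.differentiableOn one_ne_zero) hx).sub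
      (hasDerivAt_derivWithin_Icc (hf1.differentiableOn one_ne_zero) hx))
    (fun x hx => ?_) (sub_eq_zero.mpr h0.symm) (by simp [hf0', hg0']) h hh hne)
  rw [hg'' x (Ioo_subset_Icc_self hx), mul_sub]
  linarith [hf'' x (Ioo_subset_Icc_self hx)]

/-- ODE comparison for length functions: if `f″ < c²·f` and `g″ = c²·g` on
`[−A,A]`, with `f(0) = g(0)` and `f′(0) = g′(0) = 0`, then `f < g` away
from `0`. -/
theorem stmt_15 (c A : ℝ) (hc : 0 < c) (hA : 0 < A) (f g : ℝ → ℝ)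
    (hf : ContDiffOn ℝ 2 f (Icc (-A) A))
    (hg : ContDiffOn ℝ 2 g (Icc (-A) A))
    (hf'' : ∀ h ∈ Icc (-A) A,
      derivWithin (derivWithin f (Icc (-A) A)) (Icc (-A) A) h < c ^ 2 * f h)
    (hg'' : ∀ h ∈ Icc (-A) A,
      derivWithin (derivWithin g (Icc (-A) A)) (Icc (-A) A) h = c ^ 2 * g h)
    (h0 : f 0 = g 0)
    (hf0' : derivWithin f (Icc (-A) A) 0 = 0)
    (hg0' : derivWithin g (Icc (-A) A) 0 = 0) :
    ∀ h ∈ Icc (-A) A, h ≠ 0 → f h < g h :=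
  stmt_15_general c A f g hf hg hf'' hg'' h0 hf0' hg0'
end

section
/- Let c, ε, δ ∈ ℂ satisfy ε² + 2δc = 0, and define G(z) = c·z + ε + δ·z⁻¹ for z ≠ 0. Then for every r > 0: (i) ∫₀^{2π} G(r·e^{iθ})² dθ = 0, and (ii) 4·r²·∫₀^{2π} ‖G′(r·e^{iθ})‖² dθ = 4·∫₀^{2π} ‖G(r·e^{iθ})‖² dθ − 8π·‖ε‖², where G′(z) = c − δ·z⁻² is the complex derivative of G. In particular, if ε ≠ 0 then 4·r²·∫₀^{2π} ‖G′(r·e^{iθ})‖² dθ < 4·∫₀^{2π} ‖G(r·e^{iθ})‖² dθ for every r > 0. -/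
/-!
On the circle `z = r e^{iθ}` both `G` and `G'` are trigonometric polynomials with distinct
frequencies: `G = c r e^{iθ} + ε + (δ/r) e^{-iθ}` and `G' = c - (δ/r²) e^{-2iθ}`. Orthogonality
of the modes `e^{inθ}` on `[0, 2π]` gives `∫ G² = 2π (ε² + 2δc)`, and Parseval gives
`∫ |G|² = 2π (|c|² r² + |ε|² + |δ|²/r²)` and `∫ |G'|² = 2π (|c|² + |δ|²/r⁴)`; both claims are then
arithmetic.
-/

open Complex Real ComplexConjugate

theorem exp_int_mul_mul_I (n : ℤ) (θ : ℝ) : exp (n * θ * I) = exp (θ * I) ^ n := by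
  rw [mul_assoc, exp_int_mul]

section TrigPoly

variable {ι κ : Type*} [Fintype ι] [Fintype κ]

noncomputable def trigPoly (a : ι → ℂ) (k : ι → ℤ) (θ : ℝ) : ℂ :=
  ∑ i, a i * exp (k i * θ * I)

theorem integral_exp_int_mul_I (n : ℤ) :
    ∫ θ in (0:ℝ)..2 * π, exp (n * θ * I) = if n = 0 then 2 * π else 0 := by
  split_ifs with hn
  · simp [hn]
  have hc : (n * I : ℂ) ≠ 0 := mul_ne_zero (Int.cast_ne_zero.mpr hn) I_ne_zero
  have hperiod : exp (n * I * (2 * π : ℝ)) = 1 := by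
    rw [← exp_int_mul_two_pi_mul_I n]; push_cast; ring_nf
  simp_rw [mul_right_comm _ _ I]
  rw [integral_exp_mul_complex hc, hperiod]
  simp

theorem integral_trigPoly (a : ι → ℂ) (k : ι → ℤ) :
    ∫ θ in (0:ℝ)..2 * π, trigPoly a k θ = 2 * π * ∑ i, if k i = 0 then a i else 0 := by
  unfold trigPoly
  rw [intervalIntegral.integral_finsetSum fun i _ => by
    apply Continuous.intervalIntegrable; fun_prop]
  simp_rw [intervalIntegral.integral_const_mul, integral_exp_int_mul_I, Finset.mul_sum]
  congr 1 with i
  split_ifs <;> push_cast <;> ring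

theorem trigPoly_mul_trigPoly (a : ι → ℂ) (k : ι → ℤ) (b : κ → ℂ) (l : κ → ℤ) (θ : ℝ) :
    trigPoly a k θ * trigPoly b l θ =
      trigPoly (fun p : ι × κ => a p.1 * b p.2) (fun p => k p.1 + l p.2) θ := by
  simp only [trigPoly, Finset.sum_mul_sum, ← Finset.univ_product_univ, Finset.sum_product]
  congr 1 with i; congr 1 with j
  push_cast
  rw [show ((k i : ℂ) + l j) * θ * I = k i * θ * I + l j * θ * I by ring, Complex.exp_add]
  ring

theorem integral_trigPoly_mul_trigPoly (a : ι → ℂ) (k : ι → ℤ) (b : κ → ℂ) (l : κ → ℤ) :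
    ∫ θ in (0:ℝ)..2 * π, trigPoly a k θ * trigPoly b l θ =
      2 * π * ∑ i, ∑ j, if k i + l j = 0 then a i * b j else 0 := by
  simp_rw [trigPoly_mul_trigPoly, integral_trigPoly, ← Finset.univ_product_univ,
    Finset.sum_product]

theorem conj_trigPoly (a : ι → ℂ) (k : ι → ℤ) (θ : ℝ) :
    conj (trigPoly a k θ) = trigPoly (fun i => conj (a i)) (fun i => -k i) θ := by
  simp only [trigPoly, map_sum, map_mul, ← exp_conj, conj_ofReal, conj_I,
    map_intCast, Int.cast_neg]
  congr 1 with i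
  congr 2
  ring

theorem integral_norm_sq_trigPoly (a : ι → ℂ) {k : ι → ℤ} (hk : Function.Injective k) :
    ∫ θ in (0:ℝ)..2 * π, ‖trigPoly a k θ‖ ^ 2 = 2 * π * ∑ i, ‖a i‖ ^ 2 := by
  classical
  apply ofReal_injective
  rw [← intervalIntegral.integral_ofReal]
  push_cast
  simp_rw [← mul_conj', conj_trigPoly]
  rw [integral_trigPoly_mul_trigPoly]
  simp_rw [← sub_eq_add_neg, sub_eq_zero, hk.eq_iff, Finset.sum_ite_eq, Finset.mem_univ,
    if_true]

end TrigPoly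

section Laurent

variable {c ε δ : ℂ} {G : ℂ → ℂ}

theorem deriv_eq_of_eq_laurent (hG : ∀ z : ℂ, z ≠ 0 → G z = c * z + ε + δ * z⁻¹) {z : ℂ}
    (hz : z ≠ 0) : deriv G z = c - δ * (z ^ 2)⁻¹ := by
  have hloc : G =ᶠ[nhds z] fun w => c * w + ε + δ * w⁻¹ := by
    filter_upwards [eventually_ne_nhds hz] with w hw using hG w hw
  rw [hloc.deriv_eq]
  have h := (((hasDerivAt_id z).const_mul c).add_const ε).add ((hasDerivAt_inv hz).const_mul δ)
  simp only [mul_one, mul_neg, ← sub_eq_add_neg] at h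
  exact h.deriv

theorem laurent_circle_eq_trigPoly (hG : ∀ z : ℂ, z ≠ 0 → G z = c * z + ε + δ * z⁻¹) {r : ℂ}
    (hr : r ≠ 0) (θ : ℝ) :
    G (r * exp (θ * I)) = trigPoly ![c * r, ε, δ / r] ![1, 0, -1] θ := by
  rw [hG _ (mul_ne_zero hr (exp_ne_zero _))]
  simp only [trigPoly, Fin.sum_univ_three, exp_int_mul_mul_I, Matrix.cons_val, zpow_one, zpow_zero,
    zpow_neg_one]
  ring

theorem deriv_laurent_circle_eq_trigPoly (hG : ∀ z : ℂ, z ≠ 0 → G z = c * z + ε + δ * z⁻¹)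
    {r : ℂ} (hr : r ≠ 0) (θ : ℝ) :
    deriv G (r * exp (θ * I)) = trigPoly ![c, -δ / r ^ 2] ![0, -2] θ := by
  rw [deriv_eq_of_eq_laurent hG (mul_ne_zero hr (exp_ne_zero _))]
  simp only [trigPoly, Fin.sum_univ_two, exp_int_mul_mul_I, Matrix.cons_val, zpow_neg, zpow_ofNat]
  ring

end Laurent

/-- For the Laurent polynomial `G(z) = c·z + ε + δ·z⁻¹` with `ε² + 2δc = 0`:
the circle integral of `G²` vanishes, one has
`4r²∫‖G′‖² = 4∫‖G‖² − 8π‖ε‖²`, and if `ε ≠ 0` the strict inequality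
`4r²∫‖G′‖² < 4∫‖G‖²` holds for every `r > 0`. -/
theorem stmt_17 (c ε δ : ℂ) (hper : ε ^ 2 + 2 * δ * c = 0) (G : ℂ → ℂ)
    (hG : ∀ z : ℂ, z ≠ 0 → G z = c * z + ε + δ * z⁻¹) :
    ∀ r : ℝ, 0 < r →
      (∫ θ in (0:ℝ)..(2 * π),
          (G ((r : ℂ) * Complex.exp (θ * Complex.I))) ^ 2 = 0)
      ∧ (4 * r ^ 2 * ∫ θ in (0:ℝ)..(2 * π),
            ‖deriv G ((r : ℂ) * Complex.exp (θ * Complex.I))‖ ^ 2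
          = 4 * (∫ θ in (0:ℝ)..(2 * π),
              ‖G ((r : ℂ) * Complex.exp (θ * Complex.I))‖ ^ 2)
            - 8 * π * ‖ε‖ ^ 2)
      ∧ (ε ≠ 0 →
          4 * r ^ 2 * ∫ θ in (0:ℝ)..(2 * π),
              ‖deriv G ((r : ℂ) * Complex.exp (θ * Complex.I))‖ ^ 2
            < 4 * ∫ θ in (0:ℝ)..(2 * π),
                ‖G ((r : ℂ) * Complex.exp (θ * Complex.I))‖ ^ 2) := by
  intro r hr
  have hr0 : (r : ℂ) ≠ 0 := ofReal_ne_zero.mpr hr.ne'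
  simp_rw [laurent_circle_eq_trigPoly hG hr0, deriv_laurent_circle_eq_trigPoly hG hr0]
  have hG2 : ∫ θ in (0:ℝ)..2 * π, ‖trigPoly ![c * r, ε, δ / r] ![1, 0, -1] θ‖ ^ 2 =
      2 * π * (‖c‖ ^ 2 * r ^ 2 + ‖ε‖ ^ 2 + ‖δ‖ ^ 2 / r ^ 2) := by
    rw [integral_norm_sq_trigPoly _ (by decide)]
    simp [Fin.sum_univ_three, abs_of_pos hr, mul_pow, div_pow]
  have hDG2 : ∫ θ in (0:ℝ)..2 * π, ‖trigPoly ![c, -δ / r ^ 2] ![0, -2] θ‖ ^ 2 =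
      2 * π * (‖c‖ ^ 2 + ‖δ‖ ^ 2 / r ^ 4) := by
    rw [integral_norm_sq_trigPoly _ (by decide)]
    simp [Fin.sum_univ_two, abs_of_pos hr, div_pow, ← pow_mul]
  have hcompare : 4 * r ^ 2 * (2 * π * (‖c‖ ^ 2 + ‖δ‖ ^ 2 / r ^ 4)) =
      4 * (2 * π * (‖c‖ ^ 2 * r ^ 2 + ‖ε‖ ^ 2 + ‖δ‖ ^ 2 / r ^ 2)) - 8 * π * ‖ε‖ ^ 2 := by
    field_simp
    ring
  refine ⟨?_, by rw [hG2, hDG2, hcompare], fun hε => ?_⟩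
  · simp_rw [sq, integral_trigPoly_mul_trigPoly, Fin.sum_univ_three, Matrix.cons_val]
    norm_num
    field_simp
    linear_combination hper
  · rw [hG2, hDG2, hcompare]
    have : 0 < 8 * π * ‖ε‖ ^ 2 := by positivity
    linarith
end
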